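/- arXiv:2306.14371 — 7 statements merged into one kernel-verified Lean document; each statement's English description precedes it below -/
import Mathlib

section
/- Let g_1,...,g_k be polynomials in variables z_1,...,z_k over a field, each of total degree less than k-1, such that for all i < j the substitution z_i = z_j makes g_i and g_j equal as polynomials. Then the sum over i of g_i / ∏_{j≠i}(z_j - z_i), viewed as a rational function, is identically zero; equivalently, the polynomial ∑_{i=1}^k (-1)^{i-1} g_i ∏_{a<b, a,b≠i}(z_b - z_a) is the zero polynomial. -/
/-!
The sum is the Laplace expansion, along the first column, of the determinant of the matrix with
rows `(g i, 1, z i, …, z i ^ (k - 2))`. Substituting `z i := z j` makes rows `i` and `j` equal, so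
every `z j - z i` divides the determinant. These are pairwise non-associated irreducibles, hence
their product, the Vandermonde determinant of degree `k (k - 1) / 2`, divides it as well. Expanding
the determinant along its first column bounds its degree by `(k - 2) + (k - 1) (k - 2) / 2`, which
is smaller, so the determinant vanishes.
-/

open MvPolynomial Finset Matrix

theorem Fintype.card_filter_lt_eq_choose_two {α : Type*} [Fintype α] [LinearOrder α] :
    #{p : α × α | p.1 < p.2} = (Fintype.card α).choose 2 := by
  simpa using (card_product_filter_lt : #{p ∈ (univ : Finset α) ×ˢ univ | p.1 < p.2} = _)

theorem Fin.prod_filter_lt_ne_eq_prod_succAbove {M : Type*} [CommMonoid M] {n : ℕ}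
    (i : Fin (n + 1)) (f : Fin (n + 1) → Fin (n + 1) → M) :
    ∏ p : Fin (n + 1) × Fin (n + 1) with p.1 < p.2 ∧ p.1 ≠ i ∧ p.2 ≠ i, f p.1 p.2
      = ∏ p : Fin n × Fin n with p.1 < p.2, f (i.succAbove p.1) (i.succAbove p.2) := by
  symm
  refine prod_nbij (fun p => (i.succAbove p.1, i.succAbove p.2)) ?_ ?_ ?_ fun _ _ => rfl
  · simp [Fin.succAbove_ne]
  · intro p _ q _ h
    simp_all [Prod.ext_iff]
  · rintro ⟨a, b⟩ h
    simp only [coe_filter, mem_univ, true_and, Set.mem_ofPred_eq] at h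
    obtain ⟨a, rfl⟩ := Fin.exists_succAbove_eq h.2.1
    obtain ⟨b, rfl⟩ := Fin.exists_succAbove_eq h.2.2
    exact ⟨(a, b), by simpa using h.1, rfl⟩

namespace Matrix

variable {R : Type*} [CommRing R] {n : ℕ}

theorem det_vandermonde_eq_prod_filter_lt (v : Fin n → R) :
    (vandermonde v).det = ∏ p : Fin n × Fin n with p.1 < p.2, (v p.2 - v p.1) := by
  rw [det_vandermonde, prod_filter, ← univ_product_univ, prod_product]
  simp_rw [← prod_filter, filter_lt_eq_Ioi]

def borderedVandermonde (g v : Fin (n + 1) → R) : Matrix (Fin (n + 1)) (Fin (n + 1)) R :=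
  of fun r => Fin.cons (g r) fun c : Fin n => v r ^ (c : ℕ)

theorem det_borderedVandermonde (g v : Fin (n + 1) → R) :
    (borderedVandermonde g v).det
      = ∑ i : Fin (n + 1), (-1) ^ (i : ℕ) * g i * (vandermonde (v ∘ i.succAbove)).det := by
  rw [det_succ_column_zero]
  rfl

theorem det_borderedVandermonde_eq_sum_prod (g v : Fin (n + 1) → R) :
    (borderedVandermonde g v).det
      = ∑ i : Fin (n + 1), (-1) ^ (i : ℕ) * g i *
          ∏ p : Fin (n + 1) × Fin (n + 1) with p.1 < p.2 ∧ p.1 ≠ i ∧ p.2 ≠ i, (v p.2 - v p.1) := by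
  rw [det_borderedVandermonde]
  refine sum_congr rfl fun i _ => ?_
  rw [det_vandermonde_eq_prod_filter_lt]
  exact congrArg _ (Fin.prod_filter_lt_ne_eq_prod_succAbove i fun a b => v b - v a).symm

theorem det_borderedVandermonde_eq_zero {g v : Fin (n + 1) → R} {i j : Fin (n + 1)}
    (hij : i ≠ j) (hg : g i = g j) (hv : v i = v j) : (borderedVandermonde g v).det = 0 :=
  det_zero_of_row_eq hij <| funext fun c => by
    cases c using Fin.cases <;> simp [borderedVandermonde, hg, hv]

theorem map_det_borderedVandermonde {S : Type*} [CommRing S] (f : R →+* S)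
    (g v : Fin (n + 1) → R) :
    f (borderedVandermonde g v).det = (borderedVandermonde (f ∘ g) (f ∘ v)).det := by
  rw [RingHom.map_det]
  congr 1
  ext r c
  cases c using Fin.cases <;> simp [borderedVandermonde]

end Matrix

namespace MvPolynomial

variable {R σ A : Type*} [CommRing R]

theorem aeval_sub_aeval_mem [CommRing A] [Algebra R A] {I : Ideal A} {x y : σ → A}
    (h : ∀ l, x l - y l ∈ I) (p : MvPolynomial σ R) : aeval x p - aeval y p ∈ I := by
  rw [← Ideal.Quotient.mk_eq_mk_iff_sub_mem, ← Ideal.Quotient.mkₐ_eq_mk R, ← AlgHom.comp_apply,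
    ← AlgHom.comp_apply, comp_aeval, comp_aeval]
  congr 2
  funext l
  exact Ideal.Quotient.mk_eq_mk_iff_sub_mem _ _ |>.mpr (h l)

theorem X_sub_X_dvd_iff_aeval_eq_zero [DecidableEq σ] (i j : σ) (p : MvPolynomial σ R) :
    (X j - X i : MvPolynomial σ R) ∣ p
      ↔ aeval (fun l => if l = i then (X j : MvPolynomial σ R) else X l) p = 0 := by
  constructor
  · rintro ⟨q, rfl⟩
    simp
  · intro h
    rw [← Ideal.mem_span_singleton, ← sub_zero p, ← h]
    nth_rw 1 [← aeval_X_left_apply p]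
    refine aeval_sub_aeval_mem (fun l => ?_) p
    split_ifs with hl
    · rw [hl, Ideal.mem_span_singleton]
      exact ⟨-1, by ring⟩
    · simp

theorem irreducible_X_sub_X [IsDomain R] {i j : σ} (hij : i ≠ j) :
    Irreducible (X j - X i : MvPolynomial σ R) := by
  classical
  have hne : (X j - X i : MvPolynomial σ R) ≠ 0 := sub_ne_zero.mpr (X_injective.ne hij.symm)
  refine irreducible_of_totalDegree_eq_one
    (((isHomogeneous_X R j).sub (isHomogeneous_X R i)).totalDegree hne) fun x hx => ?_
  have := hx (Finsupp.single j 1)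
  simp [coeff_X, Finsupp.single_left_inj one_ne_zero, hij] at this
  exact isUnit_of_dvd_one this

theorem X_sub_X_not_dvd [Nontrivial R] [LinearOrder σ] {p q : σ × σ} (hp : p.1 < p.2)
    (hq : q.1 < q.2) (hpq : p ≠ q) : ¬ (X p.2 - X p.1 : MvPolynomial σ R) ∣ X q.2 - X q.1 := by
  rw [X_sub_X_dvd_iff_aeval_eq_zero]
  obtain ⟨a, b⟩ := p
  obtain ⟨c, d⟩ := q
  simp only [map_sub, aeval_X, sub_eq_zero] at *
  split_ifs <;> simp only [X_injective.eq_iff] <;> grind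

theorem prod_X_sub_X_dvd_of_aeval_eq_zero [IsDomain R] [UniqueFactorizationMonoid R] [LinearOrder σ]
    [Fintype σ] {p : MvPolynomial σ R}
    (h : ∀ i j, i < j → aeval (fun l => if l = i then (X j : MvPolynomial σ R) else X l) p = 0) :
    ∏ q : σ × σ with q.1 < q.2, (X q.2 - X q.1 : MvPolynomial σ R) ∣ p := by
  refine prod_dvd_of_isRelPrime (fun q hq q' hq' hqq' => ?_) fun q hq => ?_
  · exact (irreducible_X_sub_X (mem_filter.mp hq).2.ne).isRelPrime_iff_not_dvd.mpr
      (X_sub_X_not_dvd (mem_filter.mp hq).2 (mem_filter.mp hq').2 hqq')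
  · exact (X_sub_X_dvd_iff_aeval_eq_zero _ _ _).mpr (h _ _ (mem_filter.mp hq).2)

theorem isHomogeneous_prod_X_sub_X {ι : Type*} (s : Finset ι) (a b : ι → σ) :
    (∏ q ∈ s, (X (b q) - X (a q) : MvPolynomial σ R)).IsHomogeneous #s := by
  simpa using IsHomogeneous.prod s _ (fun _ => 1)
    fun q _ => (isHomogeneous_X R (b q)).sub (isHomogeneous_X R (a q))

theorem isHomogeneous_det_vandermonde_X_comp {n : ℕ} (e : Fin n → σ) :
    (vandermonde (X ∘ e : Fin n → MvPolynomial σ R)).det.IsHomogeneous (n.choose 2) := by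
  have := isHomogeneous_prod_X_sub_X (R := R) {p : Fin n × Fin n | p.1 < p.2} (e ·.1) (e ·.2)
  rw [Fintype.card_filter_lt_eq_choose_two, Fintype.card_fin] at this
  rwa [det_vandermonde_eq_prod_filter_lt]

theorem totalDegree_neg_one_pow_mul (m : ℕ) (p : MvPolynomial σ R) :
    ((-1) ^ m * p).totalDegree = p.totalDegree := by
  rcases neg_one_pow_eq_or (MvPolynomial σ R) m with h | h <;> simp [h, totalDegree_neg]

theorem det_vandermonde_X_dvd_det_borderedVandermonde [IsDomain R] [UniqueFactorizationMonoid R]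
    {n : ℕ} {g : Fin (n + 1) → MvPolynomial (Fin (n + 1)) R}
    (hg : ∀ i j, i < j →
      aeval (fun l => if l = i then (X j : MvPolynomial (Fin (n + 1)) R) else X l) (g i)
        = aeval (fun l => if l = i then (X j : MvPolynomial (Fin (n + 1)) R) else X l) (g j)) :
    (vandermonde (X (R := R))).det ∣ (borderedVandermonde g X).det := by
  rw [det_vandermonde_eq_prod_filter_lt]
  refine prod_X_sub_X_dvd_of_aeval_eq_zero fun i j hij => ?_
  rw [← AlgHom.coe_toRingHom, map_det_borderedVandermonde]
  exact det_borderedVandermonde_eq_zero hij.ne (hg i j hij) (by simp [hij.ne'])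

theorem totalDegree_det_vandermonde_X [IsDomain R] {n : ℕ} :
    (vandermonde (X (R := R) (σ := Fin n))).det.totalDegree = n.choose 2 :=
  (isHomogeneous_det_vandermonde_X_comp id).totalDegree
    (det_vandermonde_ne_zero_iff.mpr X_injective)

theorem totalDegree_det_borderedVandermonde_X_le {n d : ℕ}
    {g : Fin (n + 1) → MvPolynomial (Fin (n + 1)) R} (hg : ∀ i, (g i).totalDegree ≤ d) :
    (borderedVandermonde g X).det.totalDegree ≤ d + n.choose 2 := by
  rw [det_borderedVandermonde]
  refine totalDegree_finsetSum_le fun i _ => ?_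
  grw [totalDegree_mul, totalDegree_neg_one_pow_mul,
    (isHomogeneous_det_vandermonde_X_comp _).totalDegree_le, hg i]

end MvPolynomial

/-- If `g 1, ..., g k` are polynomials in `z 1, ..., z k` over a field,
each of total degree `< k - 1`, such that for all `i < j` substituting `z i := z j`
makes `g i` and `g j` equal, then the polynomial
`∑ i, (-1)^(i-1) * g i * ∏_{a<b, a,b≠i} (z b - z a)` is zero (equivalently, the
rational function `∑ i, g i / ∏_{j≠i} (z j - z i)` is identically zero). -/
theorem sum_vanishes_of_totalDegree_lt {F : Type*} [Field F] {k : ℕ}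
    (g : Fin k → MvPolynomial (Fin k) F)
    (hdeg : ∀ i, (g i).totalDegree < k - 1)
    (hsub : ∀ i j : Fin k, i < j →
      MvPolynomial.aeval (fun l : Fin k => if l = i then (X j : MvPolynomial (Fin k) F) else X l)
          (g i)
        = MvPolynomial.aeval
            (fun l : Fin k => if l = i then (X j : MvPolynomial (Fin k) F) else X l) (g j)) :
    ∑ i : Fin k, (-1 : MvPolynomial (Fin k) F) ^ (i : ℕ) * g i *
        ∏ p ∈ Finset.univ.filter
            (fun p : Fin k × Fin k => p.1 < p.2 ∧ p.1 ≠ i ∧ p.2 ≠ i),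
          (X p.2 - X p.1) = 0 := by
  cases k with
  | zero => simp
  | succ n =>
  have hn : 0 < n := (Nat.zero_le _).trans_lt (hdeg 0)
  rw [← det_borderedVandermonde_eq_sum_prod]
  by_contra hdet
  have hle := totalDegree_le_of_dvd_of_isDomain
    (det_vandermonde_X_dvd_det_borderedVandermonde hsub) hdet
  have hlt := totalDegree_det_borderedVandermonde_X_le (g := g) (d := n - 1) fun i => by
    have := hdeg i
    omega
  have hchoose : (n + 1).choose 2 = n + n.choose 2 := by
    rw [Nat.choose_succ_succ', Nat.choose_one_right]
  rw [totalDegree_det_vandermonde_X, hchoose] at hle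
  omega
end

section
/- The Ward numbers T(n,k), defined by T(n,k) = ∑_{m=0}^{n-k} (-1)^{n-k-m} C(2n-k, n+m) S(n+m, m) where S denotes Stirling numbers of the second kind, satisfy the alternating sum identity ∑_{k=0}^{n-1} (-1)^k T(n,k) = n! for all n ≥ 1. -/
open Finset

/-- The Stirling number of the second kind, `S(n,k) = (1/k!) ∑_{j=0}^k (-1)^(k-j) C(k,j) j^n`. -/
noncomputable def stirlingSnd (n k : ℕ) : ℚ :=
  (1 / (k.factorial : ℚ)) *
    ∑ j ∈ Finset.range (k + 1), (-1 : ℚ) ^ (k - j) * (k.choose j : ℚ) * (j : ℚ) ^ n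


open fwdDiff Function

lemma fd_shift (g : ℤ → ℚ) (k : ℕ) : ∀ z, (fwdDiff (1:ℤ))^[k] (fun y => g (y + 1)) z = (fwdDiff (1:ℤ))^[k] g (z + 1) := by
  induction k generalizing g with
  | zero => intro z; simp
  | succ k ih =>
    intro z
    rw [Function.iterate_succ_apply, Function.iterate_succ_apply]
    have h : fwdDiff (1:ℤ) (fun y => g (y+1)) = fun y => (fwdDiff (1:ℤ) g) (y + 1) := by
      funext y; simp [fwdDiff]
    rw [h, ih]

lemma fd_mul (N : ℕ) (g : ℤ → ℚ) : ∀ z, (fwdDiff (1:ℤ))^[N+1] (fun y : ℤ => (y:ℚ) * g y) z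
    = (z:ℚ) * (fwdDiff (1:ℤ))^[N+1] g z + ((N:ℚ)+1) * (fwdDiff (1:ℤ))^[N] g (z+1) := by
  induction N generalizing g with
  | zero => intro z; simp [fwdDiff]; push_cast; ring
  | succ N ih =>
    intro z
    rw [Function.iterate_succ_apply]
    have h1 : fwdDiff (1:ℤ) (fun y : ℤ => (y:ℚ) * g y)
        = (fun y : ℤ => (y:ℚ) * (fwdDiff (1:ℤ) g) y) + (fun y : ℤ => g (y+1)) := by
      funext y; simp [fwdDiff]; push_cast; ring
    rw [h1, fwdDiff_iter_add, Pi.add_apply, ih, fd_shift]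
    simp only [Function.iterate_succ_apply]
    push_cast; ring

lemma fd_pow_succ (m : ℕ) : ∀ z, (fwdDiff (1:ℤ))^[m+1] (fun x : ℤ => (x:ℚ)^m) z = 0 := by
  induction m with
  | zero =>
    intro z
    simp [fwdDiff]
  | succ m ih =>
    intro z
    have hx : (fun x : ℤ => (x:ℚ)^(m+1)) = fun x : ℤ => (x:ℚ) * (x:ℚ)^m := by
      funext x; ring
    rw [hx, fd_mul (m+1)]
    rw [Function.iterate_succ_apply', fwdDiff, ih, ih]
    ring

lemma fd_pow_self (m : ℕ) : ∀ z, (fwdDiff (1:ℤ))^[m] (fun x : ℤ => (x:ℚ)^m) z = m.factorial := by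
  induction m with
  | zero => intro z; simp
  | succ m ih =>
    intro z
    have hx : (fun x : ℤ => (x:ℚ)^(m+1)) = fun x : ℤ => (x:ℚ) * (x:ℚ)^m := by
      funext x; ring
    rw [hx, fd_mul m, fd_pow_succ m, ih]
    rw [Nat.factorial_succ]
    push_cast; ring


lemma stirlingSnd_eq_fd (N k : ℕ) :
    stirlingSnd N k = (1 / (k.factorial : ℚ)) * (fwdDiff (1:ℤ))^[k] (fun x : ℤ => (x:ℚ)^N) 0 := by
  rw [stirlingSnd, fwdDiff_iter_eq_sum_shift]
  congr 1
  refine Finset.sum_congr rfl fun j hj => ?_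
  have h : (0 : ℤ) + j • (1:ℤ) = (j : ℤ) := by simp
  rw [h, zsmul_eq_mul]
  push_cast
  ring

lemma stirlingSnd_diag (m : ℕ) : stirlingSnd m m = 1 := by
  rw [stirlingSnd_eq_fd, fd_pow_self]
  have hm : (m.factorial : ℚ) ≠ 0 := by exact_mod_cast Nat.factorial_ne_zero m
  field_simp

lemma stirlingSnd_succ_self (m : ℕ) : stirlingSnd m (m+1) = 0 := by
  rw [stirlingSnd_eq_fd, fd_pow_succ]; ring

lemma stirlingSnd_zero (n : ℕ) (hn : 1 ≤ n) : stirlingSnd n 0 = 0 := by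
  simp [stirlingSnd, zero_pow (by omega : n ≠ 0)]

lemma stirling_rec (N k : ℕ) :
    stirlingSnd (N+1) (k+1) = ((k:ℚ)+1) * stirlingSnd N (k+1) + stirlingSnd N k := by
  rw [stirlingSnd_eq_fd, stirlingSnd_eq_fd, stirlingSnd_eq_fd]
  have hx : (fun x : ℤ => (x:ℚ)^(N+1)) = fun x : ℤ => (x:ℚ) * (x:ℚ)^N := by funext x; ring
  rw [hx, fd_mul k]
  have h1 : (fwdDiff (1:ℤ))^[k] (fun x : ℤ => (x:ℚ)^N) ((0:ℤ)+1)
      = (fwdDiff (1:ℤ))^[k] (fun x : ℤ => (x:ℚ)^N) 0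
        + (fwdDiff (1:ℤ))^[k+1] (fun x : ℤ => (x:ℚ)^N) 0 := by
    rw [Function.iterate_succ_apply', fwdDiff]
    ring
  rw [h1, Nat.factorial_succ]
  have hk : (k.factorial : ℚ) ≠ 0 := by exact_mod_cast Nat.factorial_ne_zero k
  have hk1 : ((k:ℚ)+1) ≠ 0 := by positivity
  push_cast
  field_simp
  ring

noncomputable def fp : ℕ → ℕ → ℚ
  | 0, _ => 1
  | _+1, 0 => 0
  | n+1, m+1 => fp (n+1) m + ((m:ℚ)+1) * fp n (m+1)

noncomputable def fq : ℕ → ℕ → ℚ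
  | 0, _ => 1
  | _+1, 0 => 0
  | n+1, i+1 => fq (n+1) i + (i:ℚ) * fq n i

lemma fp_eq : ∀ n m, fp n m = stirlingSnd (n+m) m := by
  intro n
  induction n with
  | zero =>
    intro m
    rw [fp, zero_add, stirlingSnd_diag]
  | succ n ihn =>
    intro m
    induction m with
    | zero => rw [fp]; exact (stirlingSnd_zero (n+1+0) (by omega)).symm
    | succ m ihm =>
      rw [fp, ihm, ihn]
      have h := stirling_rec (n+m+1) m
      have e1 : n+1+(m+1) = (n+m+1)+1 := by omega
      have e2 : n+(m+1) = n+m+1 := by omega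
      have e3 : n+1+m = n+m+1 := by omega
      rw [e1, e2, e3, h]
      ring

lemma fq_zero : ∀ n, 1 ≤ n → ∀ i, i ≤ n → fq n i = 0 := by
  intro n
  induction n with
  | zero => omega
  | succ n ihn =>
    intro _ i
    induction i with
    | zero => intro _; rw [fq]
    | succ i ihi =>
      intro hi
      rw [fq, ihi (by omega)]
      rcases Nat.eq_zero_or_pos i with h | h
      · subst h; norm_num
      · rw [ihn (by omega) i (by omega)]
        ring

lemma fq_top : ∀ n, fq n (n+1) = n.factorial := by
  intro n
  induction n with
  | zero => rw [fq]; norm_num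
  | succ n ihn =>
    rw [fq, fq_zero (n+1) (by omega) (n+1) le_rfl, ihn, Nat.factorial_succ]
    push_cast; ring

noncomputable def fz (n : ℕ) (z : ℤ) : ℚ := if 0 ≤ z then fp n z.toNat else fq n (-z).toNat

lemma fz_nat (n m : ℕ) : fz n (m : ℤ) = fp n m := by simp [fz]

lemma fq_zero_eq_fp_zero (n : ℕ) : fq n 0 = fp n 0 := by
  cases n
  · rw [fq, fp]
  · rw [fq, fp]

lemma fz_neg (n i : ℕ) : fz n (-(i:ℤ)) = fq n i := by
  rcases Nat.eq_zero_or_pos i with h | h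
  · subst h
    simp [fz, fq_zero_eq_fp_zero]
  · have h2 : ¬ ((0:ℤ) ≤ -(i:ℤ)) := by omega
    simp only [fz, h2, if_false]
    congr 1
    omega

lemma fz_diff (n : ℕ) (z : ℤ) :
    fz (n+1) (z+1) - fz (n+1) z = ((z:ℚ)+1) * fz n (z+1) := by
  obtain ⟨m, rfl | rfl⟩ := Int.eq_nat_or_neg z
  · have e1 : ((m:ℤ)+1) = ((m+1 : ℕ) : ℤ) := by push_cast; ring
    rw [e1, fz_nat, fz_nat, fz_nat, fp]
    push_cast; ring
  · rcases m with _ | i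
    · norm_num
      have e1 : (1:ℤ) = ((1:ℕ):ℤ) := rfl
      rw [e1, fz_nat, fz_nat]
      have e0 : ((0:ℕ):ℤ) = 0 := rfl
      rw [← e0, fz_nat, fp, fp, fp]
      push_cast; ring
    · have e1 : (-((i+1 : ℕ):ℤ) + 1) = -((i:ℕ):ℤ) := by push_cast; ring
      rw [e1, fz_neg, fz_neg, fz_neg, fq]
      push_cast; ring

lemma key (n : ℕ) : ∀ z, (fwdDiff (1:ℤ))^[2*n+1] (fz n) z = 0 := by
  induction n with
  | zero =>
    intro z
    have h : fz 0 = fun _ => (1:ℚ) := by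
      funext z; rcases z with m | m <;> simp [fz, fp, fq]
    rw [show 2*0+1 = 1 from rfl]
    simp [h, fwdDiff]
  | succ n ih =>
    intro z
    rw [show 2*(n+1)+1 = (2*n+2)+1 from by omega, Function.iterate_succ_apply]
    have h1 : fwdDiff (1:ℤ) (fz (n+1))
        = fun y : ℤ => (fun w : ℤ => (w:ℚ) * fz n w) (y+1) := by
      funext y
      rw [fwdDiff, fz_diff]
      push_cast; ring
    rw [h1, fd_shift (fun w : ℤ => (w:ℚ) * fz n w) (2*n+2) z, show 2*n+2 = (2*n+1)+1 from rfl, fd_mul]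
    rw [Function.iterate_succ_apply', fwdDiff, ih, ih]
    ring

lemma B_eq (n : ℕ) (hn : 1 ≤ n) :
    ∑ m ∈ Finset.range (n+1), (-1:ℚ)^(n-m) * ((2*n+1).choose (n+1+m) : ℚ) * fp n m
      = (n.factorial : ℚ) := by
  have h0 := key n (-((n:ℤ)+1))
  rw [fwdDiff_iter_eq_sum_shift] at h0
  rw [show 2*n+1+1 = (n+1)+(n+1) from by omega, Finset.sum_range_add] at h0
  have hA : ∀ k ∈ Finset.range (n+1),
      (((-1:ℤ)^(2*n+1-k) * ((2*n+1).choose k : ℤ)) • fz n (-((n:ℤ)+1) + k • (1:ℤ)))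
      = if k = 0 then -(n.factorial : ℚ) else 0 := by
    intro k hk
    rw [Finset.mem_range] at hk
    have e : -((n:ℤ)+1) + k • (1:ℤ) = -(((n+1-k : ℕ)):ℤ) := by
      rw [nsmul_eq_mul, mul_one]; omega
    rw [e, fz_neg]
    rcases Nat.eq_zero_or_pos k with rfl | hkpos
    · rw [if_pos rfl, show n+1-0 = n+1 from rfl, fq_top, zsmul_eq_mul]
      push_cast [Nat.choose_zero_right]
      have h1 : (-1:ℚ)^(2*n+1) = -1 := by
        rw [pow_succ, pow_mul]; norm_num
      rw [h1]; ring
    · rw [if_neg (by omega), fq_zero n hn (n+1-k) (by omega), smul_zero]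
  rw [Finset.sum_congr rfl hA, Finset.sum_ite_eq' (Finset.range (n+1)) 0
    (fun _ => -(n.factorial : ℚ))] at h0
  have hB : ∀ m ∈ Finset.range (n+1),
      (((-1:ℤ)^(2*n+1-(n+1+m)) * ((2*n+1).choose (n+1+m) : ℤ)) •
        fz n (-((n:ℤ)+1) + (n+1+m) • (1:ℤ)))
      = (-1:ℚ)^(n-m) * ((2*n+1).choose (n+1+m) : ℚ) * fp n m := by
    intro m hm
    rw [Finset.mem_range] at hm
    have e : -((n:ℤ)+1) + (n+1+m) • (1:ℤ) = ((m:ℕ):ℤ) := by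
      rw [nsmul_eq_mul, mul_one]; push_cast; ring
    rw [e, fz_nat, zsmul_eq_mul, show 2*n+1-(n+1+m) = n-m from by omega]
    push_cast
    ring
  rw [Finset.sum_congr rfl hB] at h0
  simp only [Finset.mem_range] at h0
  have hmem : (0:ℕ) < n+1 := by omega
  rw [if_pos hmem] at h0
  linarith [h0]

lemma sum_triangle (N : ℕ) (f : ℕ → ℕ → ℚ) :
    ∑ k ∈ Finset.range (N+1), ∑ m ∈ Finset.range (N-k+1), f k m
      = ∑ m ∈ Finset.range (N+1), ∑ k ∈ Finset.range (N-m+1), f k m := by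
  have h : ∀ g : ℕ → ℕ → ℚ,
      ∑ k ∈ Finset.range (N+1), ∑ m ∈ Finset.range (N-k+1), g k m
        = ∑ k ∈ Finset.range (N+1), ∑ m ∈ Finset.range (N+1),
            if k + m ≤ N then g k m else 0 := by
    intro g
    refine Finset.sum_congr rfl fun k hk => ?_
    rw [Finset.mem_range] at hk
    rw [← Finset.sum_filter]
    congr 1
    ext a
    simp only [Finset.mem_filter, Finset.mem_range]
    omega
  calc ∑ k ∈ Finset.range (N+1), ∑ m ∈ Finset.range (N-k+1), f k m
      = ∑ k ∈ Finset.range (N+1), ∑ m ∈ Finset.range (N+1),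
          if k + m ≤ N then f k m else 0 := h f
    _ = ∑ m ∈ Finset.range (N+1), ∑ k ∈ Finset.range (N+1),
          if k + m ≤ N then f k m else 0 := Finset.sum_comm
    _ = ∑ m ∈ Finset.range (N+1), ∑ k ∈ Finset.range (N-m+1), f k m := by
        refine Finset.sum_congr rfl fun m hm => ?_
        rw [Finset.mem_range] at hm
        rw [← Finset.sum_filter]
        congr 1
        ext a
        simp only [Finset.mem_filter, Finset.mem_range]
        omega

lemma hockey (n m : ℕ) (hm : m ≤ n) :
    ∑ k ∈ Finset.range (n-m+1), (2*n-k).choose (n+m) = (2*n+1).choose (n+1+m) := by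
  rw [← Finset.sum_range_reflect]
  have h : ∀ j ∈ Finset.range (n-m+1),
      (2*n - (n-m+1-1-j)).choose (n+m) = (j + (n+m)).choose (n+m) := by
    intro j hj
    rw [Finset.mem_range] at hj
    congr 1
    omega
  rw [Finset.sum_congr rfl h, Nat.sum_range_add_choose (n-m) (n+m)]
  congr 1 <;> omega


/-- The Ward number `T(n,k) = ∑_{m=0}^{n-k} (-1)^(n-k-m) C(2n-k, n+m) S(n+m, m)`. -/
noncomputable def ward (n k : ℕ) : ℚ :=
  ∑ m ∈ Finset.range (n - k + 1),
    (-1 : ℚ) ^ (n - k - m) * ((2 * n - k).choose (n + m) : ℚ) * stirlingSnd (n + m) m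

noncomputable def wterm (n k m : ℕ) : ℚ :=
  (-1:ℚ)^k * ((-1:ℚ)^(n-k-m) * ((2*n-k).choose (n+m) : ℚ) * stirlingSnd (n+m) m)


/-- the Ward numbers satisfy `∑_{k=0}^{n-1} (-1)^k T(n,k) = n!` for all `n ≥ 1`. -/
theorem ward_alternating_sum (n : ℕ) (hn : 1 ≤ n) :
    ∑ k ∈ Finset.range n, (-1 : ℚ) ^ k * ward n k = (n.factorial : ℚ) := by
  have hlast : (-1:ℚ)^n * ward n n = 0 := by
    rw [ward, Nat.sub_self, Finset.sum_range_one]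
    simp [stirlingSnd_zero n hn]
  have hstep1 : ∑ k ∈ Finset.range n, (-1:ℚ)^k * ward n k
      = ∑ k ∈ Finset.range (n+1), (-1:ℚ)^k * ward n k := by
    rw [Finset.sum_range_succ, hlast, add_zero]
  have hstep2 : ∑ k ∈ Finset.range (n+1), (-1:ℚ)^k * ward n k
      = ∑ k ∈ Finset.range (n+1), ∑ m ∈ Finset.range (n-k+1), wterm n k m := by
    refine Finset.sum_congr rfl fun k _ => ?_
    rw [ward, Finset.mul_sum]
    exact Finset.sum_congr rfl fun m _ => by rw [wterm]
  rw [hstep1, hstep2, sum_triangle n (wterm n)]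
  have hstep3 : ∀ m ∈ Finset.range (n+1),
      ∑ k ∈ Finset.range (n-m+1), wterm n k m
      = (-1:ℚ)^(n-m) * ((2*n+1).choose (n+1+m) : ℚ) * fp n m := by
    intro m hm
    rw [Finset.mem_range] at hm
    have hin : ∀ k ∈ Finset.range (n-m+1), wterm n k m
        = ((2*n-k).choose (n+m) : ℚ) * ((-1:ℚ)^(n-m) * stirlingSnd (n+m) m) := by
      intro k hk
      rw [Finset.mem_range] at hk
      have hsign : (-1:ℚ)^k * (-1:ℚ)^(n-k-m) = (-1:ℚ)^(n-m) := by
        rw [← pow_add]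
        congr 1
        omega
      calc wterm n k m
          = ((-1:ℚ)^k * (-1:ℚ)^(n-k-m)) * ((2*n-k).choose (n+m) : ℚ)
              * stirlingSnd (n+m) m := by rw [wterm]; ring
        _ = _ := by rw [hsign]; ring
    rw [Finset.sum_congr rfl hin, ← Finset.sum_mul, ← Nat.cast_sum,
      hockey n m (by omega), fp_eq]
    ring
  rw [Finset.sum_congr rfl hstep3]
  exact B_eq n hn
end

section
/- Let T̃(n,k) = ((2n-k)!/(n-k)!) · ∑ 1/∏_{i}(α_i + 1)! where the sum is over all compositions α of n into exactly n-k positive parts. Then T̃(n,k) = ∑_{m=0}^{n-k} (-1)^{n-k-m} C(2n-k, n+m) S(n+m, m), where S is the Stirling number of the second kind. -/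
/-! The exponential generating function `φ = eˣ - 1 - x = x · ∑_{a ≥ 1} x^a/(a+1)!` turns the sum
over compositions of `n` into `ℓ` parts into the coefficient of `x^(n+ℓ)` in `φ^ℓ`. Expanding
`φ^ℓ = ∑_j (-1)^(ℓ-j) C(ℓ,j) (eˣ-1)^j x^(ℓ-j)` binomially and using `(eˣ-1)^j = j! ∑_d S(d,j) x^d/d!`
gives the formula with `ℓ = n - k` once the factorials are collected into `C(n+ℓ, n+j)`. -/

open Finset

open PowerSeries

abbrev compositions (ℓ n : ℕ) : Finset (Fin ℓ → ℕ) :=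
  (Fintype.piFinset fun _ : Fin ℓ => Icc 1 n).filter fun α => ∑ i, α i = n

lemma mem_compositions {ℓ n : ℕ} {α : Fin ℓ → ℕ} :
    α ∈ compositions ℓ n ↔ α ∈ piAntidiag univ n ∧ ∀ i, 1 ≤ α i := by
  simp only [mem_filter, Fintype.mem_piFinset, mem_Icc, mem_piAntidiag, mem_univ,
    implies_true, and_true]
  constructor
  · rintro ⟨hα, hsum⟩
    exact ⟨hsum, fun i => (hα i).1⟩
  · rintro ⟨hsum, hpos⟩
    exact ⟨fun i => ⟨hpos i, hsum ▸ single_le_sum (fun j _ => Nat.zero_le (α j)) (mem_univ i)⟩,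
      hsum⟩

lemma coeff_pow_eq_sum_piAntidiag {R : Type*} [CommSemiring R] (f : R⟦X⟧) (ℓ d : ℕ) :
    coeff d (f ^ ℓ) = ∑ α ∈ piAntidiag (univ : Finset (Fin ℓ)) d, ∏ i, coeff (α i) f := by
  rw [← Fin.prod_const, coeff_prod, finsuppAntidiag, sum_map, ← sum_attach (piAntidiag _ _)]
  rfl

lemma sum_compositions_prod_eq_coeff_pow {R : Type*} [CommSemiring R] {c : ℕ → R} (hc : c 0 = 0)
    (ℓ n : ℕ) : ∑ α ∈ compositions ℓ n, ∏ i, c (α i) = coeff n (PowerSeries.mk c ^ ℓ) := by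
  rw [coeff_pow_eq_sum_piAntidiag]
  simp only [coeff_mk]
  refine sum_subset (fun α hα => (mem_compositions.1 hα).1) fun α hα hαc => ?_
  obtain ⟨i, hi⟩ : ∃ i, α i = 0 := by
    by_contra! h
    exact hαc (mem_compositions.2 ⟨hα, fun i => Nat.one_le_iff_ne_zero.2 (h i)⟩)
  exact prod_eq_zero (mem_univ i) (hi ▸ hc)

lemma exp_sub_one_sub_X_eq_X_mul :
    exp ℚ - 1 - X =
      X * PowerSeries.mk fun a => if a = 0 then 0 else ((a + 1).factorial : ℚ)⁻¹ := by
  ext (_ | _ | a) <;> simp [coeff_exp, coeff_one, coeff_X, coeff_succ_X_mul]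

lemma coeff_sub_X_pow {R : Type*} [CommRing R] (f : R⟦X⟧) (n ℓ : ℕ) :
    coeff (n + ℓ) ((f - X) ^ ℓ) =
      ∑ j ∈ range (ℓ + 1), (-1) ^ (ℓ - j) * (ℓ.choose j : R) * coeff (n + j) (f ^ j) := by
  rw [sub_eq_add_neg, add_pow, map_sum]
  refine sum_congr rfl fun j hj => ?_
  have hjℓ : j ≤ ℓ := Nat.lt_succ_iff.1 (mem_range.1 hj)
  have hterm : f ^ j * (-X) ^ (ℓ - j) * (ℓ.choose j : R⟦X⟧) =
      C ((-1) ^ (ℓ - j) * (ℓ.choose j : R)) * (f ^ j * X ^ (ℓ - j)) := by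
    simp only [map_mul, map_pow, map_neg, map_one, map_natCast, neg_pow X]
    ring
  rw [hterm, coeff_C_mul, show n + ℓ = n + j + (ℓ - j) by omega, coeff_mul_X_pow]

lemma coeff_exp_sub_one_pow (d j : ℕ) :
    coeff d ((exp ℚ - 1) ^ j) = j.factorial / d.factorial * stirlingSnd d j := by
  rw [sub_eq_add_neg, add_pow, map_sum, stirlingSnd, ← mul_assoc, mul_sum]
  refine sum_congr rfl fun i _ => ?_
  have hterm : exp ℚ ^ i * (-1) ^ (j - i) * (j.choose i : ℚ⟦X⟧) =
      C ((-1) ^ (j - i) * (j.choose i : ℚ)) * rescale (i : ℚ) (exp ℚ) := by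
    simp only [map_mul, map_pow, map_neg, map_one, map_natCast, exp_pow_eq_rescale_exp]
    ring
  have hd : (d.factorial : ℚ) ≠ 0 := by positivity
  rw [hterm, coeff_C_mul, coeff_rescale, coeff_exp, Algebra.algebraMap_self, RingHom.id_apply]
  field_simp

lemma sum_compositions_eq_coeff_exp_sub_one_sub_X_pow (ℓ n : ℕ) :
    ∑ α ∈ compositions ℓ n, 1 / ∏ i, ((α i + 1).factorial : ℚ) =
      coeff (n + ℓ) ((exp ℚ - 1 - X) ^ ℓ) := by
  rw [exp_sub_one_sub_X_eq_X_mul, mul_pow, coeff_X_pow_mul,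
    ← sum_compositions_prod_eq_coeff_pow (by simp)]
  refine sum_congr rfl fun α hα => ?_
  have hpos := (mem_compositions.1 hα).2
  simp only [one_div, ← prod_inv_distrib]
  exact prod_congr rfl fun i _ => (if_neg (Nat.one_le_iff_ne_zero.1 (hpos i))).symm

lemma factorial_div_mul_choose_mul_factorial_div {n ℓ j : ℕ} (h : j ≤ ℓ) :
    ((n + ℓ).factorial / ℓ.factorial : ℚ) * ℓ.choose j * (j.factorial / (n + j).factorial) =
      (n + ℓ).choose (n + j) := by
  rw [Nat.cast_choose ℚ h, Nat.cast_choose ℚ (by omega : n + j ≤ n + ℓ),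
    show n + ℓ - (n + j) = ℓ - j by omega]
  field_simp

theorem tildeT_eq_ward_general (n k : ℕ) (hk : k ≤ n - 1) :
    ((2 * n - k).factorial : ℚ) / ((n - k).factorial : ℚ) *
      ∑ α ∈ (Fintype.piFinset fun _ : Fin (n - k) => Finset.Icc 1 n).filter
          (fun α => ∑ i, α i = n),
        1 / ∏ i, ((α i + 1).factorial : ℚ)
    = ∑ m ∈ Finset.range (n - k + 1),
        (-1 : ℚ) ^ (n - k - m) * ((2 * n - k).choose (n + m) : ℚ) * stirlingSnd (n + m) m := by
  rw [show 2 * n - k = n + (n - k) by omega, sum_compositions_eq_coeff_exp_sub_one_sub_X_pow,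
    coeff_sub_X_pow, mul_sum]
  refine sum_congr rfl fun j hj => ?_
  rw [coeff_exp_sub_one_pow, ← factorial_div_mul_choose_mul_factorial_div
    (Nat.lt_succ_iff.1 (mem_range.1 hj))]
  ring

/-- with `T̃(n,k) = ((2n-k)!/(n-k)!) ∑_α 1/∏_i (α_i+1)!`, the sum being over
compositions `α` of `n` into exactly `n-k` positive parts, one has
`T̃(n,k) = ∑_{m=0}^{n-k} (-1)^(n-k-m) C(2n-k, n+m) S(n+m, m)`. -/
theorem tildeT_eq_ward (n k : ℕ) (hn : 1 ≤ n) (hk : k ≤ n - 1) :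
    ((2 * n - k).factorial : ℚ) / ((n - k).factorial : ℚ) *
      ∑ α ∈ (Fintype.piFinset fun _ : Fin (n - k) => Finset.Icc 1 n).filter
          (fun α => ∑ i, α i = n),
        1 / ∏ i, ((α i + 1).factorial : ℚ)
    = ∑ m ∈ Finset.range (n - k + 1),
        (-1 : ℚ) ^ (n - k - m) * ((2 * n - k).choose (n + m) : ℚ) * stirlingSnd (n + m) m :=
  tildeT_eq_ward_general n k hk
end

section
/- Let X_{i,j} and Y_{i,j} (1 ≤ i ≤ r, 2 ≤ j ≤ ℓ) be commuting indeterminates. For a Fibonacci matrix E of size r×ℓ, define wt(E;(i,j)) = X_{i,j} if some (a,b) ∈ LB(i,j)\{(i,j)} satisfies E_{a,b}=1; wt(E;(i,j)) = Y_{i,j} if E_{i,j}=1; and wt(E;(i,j)) = X_{i,j}+Y_{i,j} otherwise, where LB(i,j) = {(a,j-1): a ≤ i} ∪ {(a,j): a ≥ i}. Then ∑_E (-1)^{|E|} ∏_{i,j} wt(E;(i,j)) = ∏_{i,j} X_{i,j}, where the sum is over all Fibonacci matrices E of size r×ℓ and |E| is the number of ones in E. -/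
open scoped Classical
open MvPolynomial

/-- A Fibonacci matrix (entries `true` = 1, `false` = 0): a 0-1 matrix whose first column
is zero, each column has at most one nonzero entry, and whenever `E a j = E b (j+1) = 1`
one has `a > b`. -/
def IsFibMat {r l : ℕ} (E : Fin r → Fin l → Bool) : Prop :=
  (∀ (i : Fin r) (j : Fin l), (j : ℕ) = 0 → E i j = false) ∧
  (∀ (j : Fin l) (a b : Fin r), E a j = true → E b j = true → a = b) ∧
  (∀ (a b : Fin r) (j j' : Fin l), E a j = true → E b j' = true →
    (j' : ℕ) = (j : ℕ) + 1 → (b : ℕ) < (a : ℕ))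

/-- The weight `wt(E;(i,j))`: `X (i,j)` if some cell `(a,b)` of the lightning bolt set
`LB(i,j) = {(a,j-1) : a ≤ i} ∪ {(a,j) : a ≥ i}` other than `(i,j)` itself carries a 1 of `E`;
`Y (i,j)` if `E i j = 1`; and `X (i,j) + Y (i,j)` otherwise. The `X` variables are indexed by
`Sum.inl`, the `Y` variables by `Sum.inr`. -/
noncomputable def wt {r l : ℕ} (E : Fin r → Fin l → Bool) (i : Fin r) (j : Fin l) :
    MvPolynomial ((Fin r × Fin l) ⊕ (Fin r × Fin l)) ℤ :=
  if ∃ a : Fin r, ∃ b : Fin l,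
      (((b : ℕ) + 1 = (j : ℕ) ∧ a ≤ i) ∨ (b = j ∧ i ≤ a)) ∧ (a, b) ≠ (i, j) ∧ E a b = true then
    X (Sum.inl (i, j))
  else if E i j = true then X (Sum.inr (i, j))
  else X (Sum.inl (i, j)) + X (Sum.inr (i, j))

/-!
Encode a Fibonacci matrix by its columns, each being the row of its 1 or `none`. The summand then
factors over the columns `j ≥ 1` into terms depending only on columns `j - 1` and `j` (a term
vanishes unless these two columns satisfy the Fibonacci condition), so the sum is a
transfer-matrix product. Whatever column `j - 1` is, the column-`j` terms sum to `∏ i, X (i, j)`: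
rows weakly below the 1 of column `j - 1` always weigh `X`, and on the rows above it the sum is
`∏ (X + Y) - ∑ b, (∏ i < b, X) * Y b * ∏ i > b, (X + Y)`, which is `∏ X` by expanding the
product of binomials according to the first row where `Y` is chosen.
-/

open Finset

theorem Finset.prod_ite_lt_eq_mul {ι M : Type*} [LinearOrder ι] [CommMonoid M] {s : Finset ι}
    {b : ι} (hb : b ∈ s) (u v w : ι → M) :
    ∏ i ∈ s, (if i < b then u i else if i = b then v i else w i) =
      v b * (∏ i ∈ s with i < b, u i) * ∏ i ∈ s with b < i, w i := by
  have hsplit : ({i ∈ s | ¬ i < b} : Finset ι) = insert b {i ∈ s | b < i} := by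
    ext i
    simp only [mem_filter, mem_insert, not_lt, le_iff_eq_or_lt]
    constructor
    · rintro ⟨hi, rfl | h⟩ <;> tauto
    · rintro (rfl | ⟨hi, h⟩) <;> tauto
  rw [← prod_filter_mul_prod_filter_not s (· < b), hsplit, prod_insert (by simp),
    if_neg (lt_irrefl b), if_pos rfl,
    prod_congr (s₁ := {i ∈ s | i < b}) rfl fun i hi => if_pos (mem_filter.1 hi).2,
    prod_congr (s₁ := {i ∈ s | b < i}) rfl fun i hi => by
      rw [if_neg (mem_filter.1 hi).2.not_gt, if_neg (mem_filter.1 hi).2.ne']]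
  rw [mul_left_comm, mul_assoc]

theorem Finset.prod_add_eq_prod_add_sum_prod_ite {ι R : Type*} [LinearOrder ι] [CommSemiring R]
    (s : Finset ι) (x y : ι → R) :
    ∏ i ∈ s, (x i + y i) =
      ∏ i ∈ s, x i + ∑ b ∈ s, ∏ i ∈ s, if i < b then x i else if i = b then y i else x i + y i := by
  refine (prod_add_ordered (ι := ιᵒᵈ) s x y).trans ?_
  congr 1
  refine sum_congr rfl fun b hb => ?_
  rw [prod_ite_lt_eq_mul (ι := ι) hb, mul_right_comm]
  rfl

theorem Fin.sum_mul_prod_chain {α R : Type*} [Fintype α] [CommSemiring R] {n : ℕ}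
    (g : α → R) (f : Fin n → α → α → R) (s : Fin n → R) (hf : ∀ j p, ∑ c, f j p c = s j) :
    ∑ d : Fin (n + 1) → α, g (d 0) * ∏ j : Fin n, f j (d j.castSucc) (d j.succ) =
      (∑ p, g p) * ∏ j, s j := by
  induction n generalizing g with
  | zero => simp [← (Fin.consEquiv fun _ => α).sum_comp, Fintype.sum_prod_type]
  | succ n ih =>
    rw [← (Fin.consEquiv fun _ => α).sum_comp, Fintype.sum_prod_type, sum_comm]
    simp only [Fin.consEquiv_apply, Fin.prod_univ_succ, Fin.cons_zero, Fin.cons_succ,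
      Fin.castSucc_zero, ← Fin.succ_castSucc, ← mul_assoc, ← sum_mul]
    rw [ih (fun p => ∑ i, g i * f 0 i p) (fun j => f j.succ) (fun j => s j.succ)
      (fun j => hf j.succ), sum_comm]
    simp only [← mul_sum, hf, ← sum_mul, mul_assoc]

theorem Fin.prod_filter_one_le {M : Type*} [CommMonoid M] {n : ℕ} (f : Fin (n + 1) → M) :
    ∏ j ∈ univ.filter (fun j : Fin (n + 1) => 1 ≤ (j : ℕ)), f j = ∏ j : Fin n, f j.succ := by
  rw [prod_filter, Fin.prod_univ_succ]
  simp

namespace FibMat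

variable {ι R : Type*} [LinearOrder ι] [CommRing R]

def Admissible (p c : Option ι) : Prop := ∀ a ∈ p, ∀ b ∈ c, b < a

/-- `colWeight x y p c i` is `wt(E; (i, j))` when the 1 of column `j - 1` of `E` is in row `p`
and that of column `j` in row `c` (`none` for a zero column), with `x = X (·, j)`, `y = Y (·, j)`. -/
noncomputable def colWeight (x y : ι → R) (p c : Option ι) (i : ι) : R :=
  if (∃ a ∈ p, a ≤ i) ∨ ∃ b ∈ c, i < b then x i else if c = some i then y i else x i + y i

def colSign (c : Option ι) : R := if c = none then 1 else -1

noncomputable def colTerm [Fintype ι] (x y : ι → R) (p c : Option ι) : R :=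
  if Admissible p c then colSign c * ∏ i, colWeight x y p c i else 0

theorem sum_colTerm [Fintype ι] (x y : ι → R) (p : Option ι) :
    ∑ c, colTerm x y p c = ∏ i, x i := by
  -- `s` is the set of rows above the 1 of `p`; outside `s` every weight is `x`.
  set s := ({i | ∀ a ∈ p, i < a} : Finset ι)
  set x' := ∏ i ∈ univ with ¬ ∀ a ∈ p, i < a, x i
  have hsplit : ∀ c, ∏ i, colWeight x y p c i = (∏ i ∈ s, colWeight x y p c i) * x' := fun c => by
    rw [← prod_filter_mul_prod_filter_not univ (fun i => ∀ a ∈ p, i < a)]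
    congr 1
    refine prod_congr rfl fun i hi => ?_
    obtain ⟨a, ha, hai⟩ := not_forall₂.1 (mem_filter.1 hi).2
    exact if_pos (Or.inl ⟨a, ha, not_lt.1 hai⟩)
  have hlow : ∀ i ∈ s, ¬ ∃ a ∈ p, a ≤ i := fun i hi ⟨a, ha, hai⟩ =>
    ((mem_filter.1 hi).2 a ha).not_ge hai
  have hnone : ∀ i ∈ s, colWeight x y p none i = x i + y i := fun i hi => by
    rw [colWeight, if_neg (not_or.2 ⟨hlow i hi, by simp⟩), if_neg (by simp)]
  have hsome : ∀ b, ∀ i ∈ s, colWeight x y p (some b) i =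
      if i < b then x i else if i = b then y i else x i + y i := fun b i hi => by
    simp only [colWeight, hlow i hi, false_or]
    simp [eq_comm]
  have hadm : ∀ b, Admissible p (some b) ↔ b ∈ s := fun b => by
    simp [Admissible, s]
  rw [Fintype.sum_option]
  simp only [colTerm, hadm, ← sum_filter, hsplit, colSign, if_true, reduceCtorEq, if_false,
    prod_congr rfl hnone, prod_congr rfl (hsome _), filter_mem_eq_inter, univ_inter]
  rw [if_pos (by simp [Admissible]), prod_add_eq_prod_add_sum_prod_ite,
    ← prod_filter_mul_prod_filter_not univ (fun i => ∀ a ∈ p, i < a)]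
  simp only [← sum_mul, sum_neg_distrib, one_mul, neg_mul]
  ring

variable {r : ℕ}

noncomputable def xCol {l : ℕ} (j : Fin l) (a : Fin r) :
    MvPolynomial ((Fin r × Fin l) ⊕ (Fin r × Fin l)) ℤ :=
  X (Sum.inl (a, j))

noncomputable def yCol {l : ℕ} (j : Fin l) (a : Fin r) :
    MvPolynomial ((Fin r × Fin l) ⊕ (Fin r × Fin l)) ℤ :=
  X (Sum.inr (a, j))

def ofCols {l : ℕ} (d : Fin l → Option (Fin r)) : Fin r → Fin l → Bool :=
  fun a j => d j = some a

theorem ofCols_injective {l : ℕ} : Function.Injective (ofCols (r := r) (l := l)) :=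
  fun d d' h => funext fun j => Option.ext fun a => by
    simpa [ofCols] using congrFun (congrFun h a) j

theorem exists_ofCols_eq {l : ℕ} {E : Fin r → Fin l → Bool}
    (hE : ∀ j a b, E a j = true → E b j = true → a = b) : ∃ d, ofCols d = E := by
  have hcol : ∀ j, ∃ o : Option (Fin r), ∀ a, o = some a ↔ E a j = true := fun j => by
    by_cases h : ∃ a, E a j = true
    · obtain ⟨a, ha⟩ := h
      exact ⟨some a, fun b => ⟨fun hb => Option.some_inj.1 hb ▸ ha, fun hb => by
        rw [hE j a b ha hb]⟩⟩
    · exact ⟨none, fun a => by simpa using fun ha => h ⟨a, ha⟩⟩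
  choose d hd using hcol
  exact ⟨d, funext fun a => funext fun j => by simp [ofCols, hd j a]⟩

theorem isFibMat_ofCols_iff {n : ℕ} {d : Fin (n + 1) → Option (Fin r)} :
    IsFibMat (ofCols d) ↔ d 0 = none ∧ ∀ j : Fin n, Admissible (d j.castSucc) (d j.succ) := by
  simp only [IsFibMat, ofCols, decide_eq_true_eq, decide_eq_false_iff_not, Admissible,
    Option.mem_def]
  constructor
  · rintro ⟨h0, -, hadj⟩
    refine ⟨Option.eq_none_iff_forall_ne_some.2 fun a => h0 a 0 rfl, fun j a ha b hb => ?_⟩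
    exact hadj a b _ _ ha hb (by simp)
  · rintro ⟨h0, hadm⟩
    refine ⟨fun i j hj => ?_, fun j a b ha hb => Option.some_inj.1 (ha.symm.trans hb),
      fun a b j j' ha hb hjj' => ?_⟩
    · obtain rfl : j = 0 := Fin.ext hj
      simp [h0]
    · obtain ⟨k, rfl, rfl⟩ : ∃ k : Fin n, j = k.castSucc ∧ j' = k.succ :=
        ⟨⟨j, by omega⟩, Fin.ext rfl, Fin.ext (by simp [hjj'])⟩
      exact hadm k a ha b hb

theorem neg_one_pow_card_ofCols {R : Type*} [CommRing R] {l : ℕ} (d : Fin l → Option (Fin r)) :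
    (-1 : R) ^ (univ.filter fun p : Fin r × Fin l => ofCols d p.1 p.2 = true).card =
      ∏ j, colSign (d j) := by
  rw [card_filter, Fintype.sum_prod_type_right, ← prod_pow_eq_pow_sum]
  refine prod_congr rfl fun j _ => ?_
  cases h : d j <;> simp [ofCols, h, colSign]

theorem wt_ofCols {n : ℕ} (d : Fin (n + 1) → Option (Fin r)) (i : Fin r) (j : Fin n) :
    wt (ofCols d) i j.succ = colWeight (xCol j.succ) (yCol j.succ) (d j.castSucc) (d j.succ) i := by
  have hbolt : (∃ (a : Fin r) (b : Fin (n + 1)),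
      (((b : ℕ) + 1 = (j.succ : ℕ) ∧ a ≤ i) ∨ (b = j.succ ∧ i ≤ a)) ∧
        (a, b) ≠ (i, j.succ) ∧ ofCols d a b = true) ↔
      (∃ a ∈ d j.castSucc, a ≤ i) ∨ ∃ b ∈ d j.succ, i < b := by
    constructor
    · rintro ⟨a, b, ⟨hb, hai⟩ | ⟨rfl, hia⟩, hne, hab⟩
      · obtain rfl : b = j.castSucc :=
          Fin.ext (by simp only [Fin.val_succ, Fin.val_castSucc] at hb ⊢; omega)
        exact Or.inl ⟨a, decide_eq_true_iff.1 hab, hai⟩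
      · exact Or.inr ⟨a, decide_eq_true_iff.1 hab, lt_of_le_of_ne hia fun h => hne (by rw [h])⟩
    · rintro (⟨a, ha, hai⟩ | ⟨b, hb, hib⟩)
      · exact ⟨a, j.castSucc, Or.inl ⟨by simp, hai⟩, by simp [Fin.castSucc_lt_succ.ne],
          decide_eq_true_iff.2 ha⟩
      · exact ⟨b, j.succ, Or.inr ⟨rfl, hib.le⟩, by simp [hib.ne'], decide_eq_true_iff.2 hb⟩
  have hself : ofCols d i j.succ = true ↔ d j.succ = some i := decide_eq_true_iff
  simp only [wt, colWeight, hbolt, hself, xCol, yCol]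
  congr

theorem ite_isFibMat_ofCols {n : ℕ} (d : Fin (n + 1) → Option (Fin r)) :
    (if IsFibMat (ofCols d) then
      (-1 : MvPolynomial ((Fin r × Fin (n + 1)) ⊕ (Fin r × Fin (n + 1))) ℤ) ^
          (univ.filter fun p : Fin r × Fin (n + 1) => ofCols d p.1 p.2 = true).card *
        ∏ i : Fin r, ∏ j ∈ univ.filter (fun j : Fin (n + 1) => 1 ≤ (j : ℕ)), wt (ofCols d) i j
    else 0) =
      (if d 0 = none then 1 else 0) *
        ∏ j : Fin n, colTerm (xCol j.succ) (yCol j.succ) (d j.castSucc) (d j.succ) := by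
  by_cases h : d 0 = none ∧ ∀ j : Fin n, Admissible (d j.castSucc) (d j.succ)
  · rw [if_pos (isFibMat_ofCols_iff.2 h), if_pos h.1, one_mul, neg_one_pow_card_ofCols,
      Fin.prod_univ_succ, h.1]
    simp only [Fin.prod_filter_one_le, wt_ofCols, colTerm, if_pos (h.2 _), prod_mul_distrib]
    rw [prod_comm]
    simp [colSign]
  · rw [if_neg (mt isFibMat_ofCols_iff.1 h)]
    by_cases h0 : d 0 = none
    · obtain ⟨j, hj⟩ : ∃ j : Fin n, ¬ Admissible (d j.castSucc) (d j.succ) := by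
        simpa [h0] using h
      rw [prod_eq_zero (mem_univ j) (if_neg hj), mul_zero]
    · rw [if_neg h0, zero_mul]

theorem sum_isFibMat_eq_sum_cols (n : ℕ) :
    ∑ E ∈ univ.filter (fun E : Fin r → Fin (n + 1) → Bool => IsFibMat E),
      (-1 : MvPolynomial ((Fin r × Fin (n + 1)) ⊕ (Fin r × Fin (n + 1))) ℤ) ^
          (univ.filter fun p : Fin r × Fin (n + 1) => E p.1 p.2 = true).card *
        ∏ i : Fin r, ∏ j ∈ univ.filter (fun j : Fin (n + 1) => 1 ≤ (j : ℕ)), wt E i j =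
      ∑ d : Fin (n + 1) → Option (Fin r), (if d 0 = none then 1 else 0) *
        ∏ j : Fin n, colTerm (xCol j.succ) (yCol j.succ) (d j.castSucc) (d j.succ) := by
  rw [sum_filter]
  refine (Fintype.sum_of_injective ofCols ofCols_injective _ _ (fun E hE => if_neg ?_)
    fun d => (ite_isFibMat_ofCols d).symm).symm
  intro hfib
  obtain ⟨d, rfl⟩ := exists_ofCols_eq hfib.2.1
  exact hE ⟨d, rfl⟩

end FibMat

open FibMat in
/-- `∑_E (-1)^|E| ∏_{1≤i≤r, 2≤j≤ℓ} wt(E;(i,j)) = ∏_{1≤i≤r, 2≤j≤ℓ} X_{i,j}`,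
the sum being over all Fibonacci matrices `E` of size `r × ℓ`, where `|E|` is the number
of ones of `E`. -/
theorem fib_matrix_weight_sum (r l : ℕ) :
    ∑ E ∈ Finset.univ.filter (fun E : Fin r → Fin l → Bool => IsFibMat E),
      (-1 : MvPolynomial ((Fin r × Fin l) ⊕ (Fin r × Fin l)) ℤ) ^
          ((Finset.univ.filter fun p : Fin r × Fin l => E p.1 p.2 = true).card) *
        ∏ i : Fin r, ∏ j ∈ Finset.univ.filter (fun j : Fin l => 1 ≤ (j : ℕ)), wt E i j
    = ∏ i : Fin r, ∏ j ∈ Finset.univ.filter (fun j : Fin l => 1 ≤ (j : ℕ)),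
        (X (Sum.inl (i, j)) : MvPolynomial ((Fin r × Fin l) ⊕ (Fin r × Fin l)) ℤ) := by
  cases l with
  | zero => simp [IsFibMat]
  | succ n =>
    rw [sum_isFibMat_eq_sum_cols,
      Fin.sum_mul_prod_chain (fun p => if p = none then 1 else 0) _ _
        fun j p => sum_colTerm (xCol j.succ) (yCol j.succ) p,
      Fintype.sum_ite_eq', one_mul, prod_comm]
    simp only [Fin.prod_filter_one_le, xCol]
end

section
/- Kreweras numbers count Dyck paths by horizontal run type: for a partition λ of n, the number of Dyck paths of size n whose multiset of lengths of maximal consecutive runs of East steps equals the multiset of parts of λ is Krew(λ) = (1/(n+1)) · C(n+1; n+1-ℓ(λ), m_1(λ), ..., m_n(λ)), where m_j(λ) is the multiplicity of j in λ. -/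
/-- A Dyck word of size `n`, encoded as a list of steps read from `(0,0)`
(`true` = North, `false` = East): it has length `2n`, exactly `n` North steps,
and every prefix has at least as many North steps as East steps
(the path stays weakly above the diagonal `y = x`). -/
def IsDyckWord (n : ℕ) (w : List Bool) : Prop :=
  w.length = 2 * n ∧ w.count true = n ∧
    ∀ i, (w.take i).count false ≤ (w.take i).count true

/-- The composition `α(π)` of lengths of maximal runs of consecutive East steps of a path. -/
def eRuns (w : List Bool) : List ℕ :=
  (((w.splitOnP (fun b => b)).map List.length).filter (fun x => x ≠ 0))

/-!
Record a Dyck path by the lengths of its `n + 1` East runs: the one before the first North step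
(always empty) and the one after each North step. This is a bijection onto the sequences whose
multiset is `λ` padded with zeros to `n + 1` entries and all of whose nonempty prefixes have sum
less than their length. By the cycle lemma, exactly one of the `n + 1` rotations of a sequence of
length `n + 1` and sum `n` has this property, and the rotations of such a sequence are pairwise
distinct. Hence the Dyck paths of type `λ` are an `(n + 1)`-th of all rearrangements of the padded
multiset, and these are counted by the multinomial coefficient.
-/

open scoped Nat

lemma Function.Injective.natCard_subtype_comp {α β : Type*} {f : β → α}
    (hf : Function.Injective f) {P : α → Prop} (hP : ∀ x, P x → x ∈ Set.range f) :
    Nat.card {y // P (f y)} = Nat.card {x // P x} := by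
  have := Set.ncard_preimage_of_injective_subset_range (s := {x | P x}) hf hP
  rwa [← Nat.card_coe_set_eq, ← Nat.card_coe_set_eq] at this

lemma Nat.multinomial_map {α β : Type*} (s : Finset β) (e : β ↪ α) (f : α → ℕ) :
    Nat.multinomial (s.map e) f = Nat.multinomial s (f ∘ e) := by
  simp only [Nat.multinomial, Finset.sum_map, Finset.prod_map, Function.comp_apply]

namespace Multiset

variable {α : Type*}

instance finite_lists_coe_eq (m : Multiset α) : Finite {l : List α // (l : Multiset α) = m} :=
  Set.Finite.to_subtype <| m.toList.permutations.finite_toSet.subset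
    fun l (hl : (l : Multiset α) = m) =>
      List.mem_permutations.mpr (coe_eq_coe.mp (by rw [hl, coe_toList]))

variable [DecidableEq α]

lemma natCard_lists_eq_sum_erase {m : Multiset α} (hm : m ≠ 0) :
    Nat.card {l : List α // (l : Multiset α) = m} =
      ∑ a ∈ m.toFinset, Nat.card {l : List α // (l : Multiset α) = m.erase a} := by
  let f : (Σ a : m.toFinset, {l : List α // (l : Multiset α) = m.erase a}) →
      {l : List α // (l : Multiset α) = m} := fun p =>
    ⟨p.1 :: p.2.1, by rw [← cons_coe, p.2.2, cons_erase (mem_toFinset.mp p.1.2)]⟩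
  have hf : Function.Bijective f := by
    constructor
    · rintro ⟨⟨a, _⟩, ⟨t, _⟩⟩ ⟨⟨a', _⟩, ⟨t', _⟩⟩ h
      obtain ⟨rfl, rfl⟩ := List.cons_eq_cons.mp (congrArg Subtype.val h)
      rfl
    · rintro ⟨_ | ⟨a, t⟩, hl⟩
      · exact absurd hl.symm hm
      · have ha : a ∈ m := hl ▸ mem_cons_self a t
        refine ⟨⟨⟨a, mem_toFinset.mpr ha⟩, ⟨t, ?_⟩⟩, rfl⟩
        show (t : Multiset α) = m.erase a
        rw [← hl, ← cons_coe, erase_cons_head]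
  rw [← Nat.card_eq_of_bijective f hf, Nat.card_sigma]
  exact Finset.sum_coe_sort m.toFinset fun a => Nat.card {l : List α // ↑l = m.erase a}

lemma prod_factorial_count_eq_count_mul {s : Finset α} {m : Multiset α} {a : α} (ha : a ∈ m)
    (hs : a ∈ s) :
    ∏ x ∈ s, (m.count x)! = m.count a * ∏ x ∈ s, ((m.erase a).count x)! := by
  rw [← Finset.mul_prod_erase s _ hs, ← Finset.mul_prod_erase s _ hs, ← mul_assoc,
    count_erase_self, Nat.mul_factorial_pred (count_ne_zero.mpr ha)]
  congr 1
  exact Finset.prod_congr rfl fun x hx => by rw [count_erase_of_ne (Finset.ne_of_mem_erase hx)]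

lemma natCard_lists_mul_prod_factorial (s : Finset α) (m : Multiset α)
    (hms : ∀ a ∈ m, a ∈ s) :
    Nat.card {l : List α // (l : Multiset α) = m} * ∏ a ∈ s, (m.count a)! = (card m)! := by
  induction m using Multiset.strongInductionOn with
  | ih m ih =>
    rcases eq_or_ne m 0 with rfl | hm
    · simp
    rw [natCard_lists_eq_sum_erase hm, Finset.sum_mul]
    have hterm : ∀ a ∈ m.toFinset, Nat.card {l : List α // (l : Multiset α) = m.erase a} *
        ∏ x ∈ s, (m.count x)! = m.count a * (card m - 1)! := by
      intro a ha
      rw [mem_toFinset] at ha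
      rw [prod_factorial_count_eq_count_mul ha (hms a ha), mul_left_comm,
        ih _ (erase_lt.mpr ha) fun x hx => hms x (mem_of_mem_erase hx), card_erase_of_mem ha]
      rfl
    rw [Finset.sum_congr rfl hterm, ← Finset.sum_mul, toFinset_sum_count_eq,
      Nat.mul_factorial_pred (card_pos.mpr hm).ne']

theorem natCard_lists_eq_multinomial {s : Finset α} {m : Multiset α}
    (hms : ∀ a ∈ m, a ∈ s) :
    Nat.card {l : List α // (l : Multiset α) = m} = Nat.multinomial s m.count := by
  refine Nat.eq_of_mul_eq_mul_right (Nat.prod_factorial_pos s m.count) ?_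
  rw [natCard_lists_mul_prod_factorial s m hms, mul_comm, Nat.multinomial_spec,
    sum_count_eq_card hms]

end Multiset

def PrefixSumsLt (a : List ℕ) : Prop :=
  ∀ k, 0 < k → (a.take k).sum < k

section CycleLemma

open List

variable {l : List ℕ} {r : ℕ}

/-- Height after `k ≤ 2 * l.length` steps of the walk with steps `lᵢ - 1`, read cyclically. -/
def cyclicExcess (l : List ℕ) (k : ℕ) : ℤ :=
  ((l ++ l).take k).sum - k

lemma take_rotate_eq_take_drop_append_self {t : ℕ} (hr : r ≤ l.length) (ht : t ≤ l.length) :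
    (l.rotate r).take t = ((l ++ l).drop r).take t := by
  rw [rotate_eq_drop_append_take hr, drop_append_of_le_length hr, take_append, take_append,
    take_take, Nat.min_eq_left (by simp only [length_drop]; omega)]

lemma sum_take_rotate_add {t : ℕ} (hr : r ≤ l.length) (ht : t ≤ l.length) :
    ((l.rotate r).take t).sum + ((l ++ l).take r).sum = ((l ++ l).take (r + t)).sum := by
  rw [take_rotate_eq_take_drop_append_self hr ht, take_add, sum_append, Nat.add_comm]

lemma cyclicExcess_length_add {k : ℕ} (hk : k ≤ l.length) :
    cyclicExcess l (l.length + k) = cyclicExcess l k + l.sum - l.length := by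
  simp only [cyclicExcess, take_length_add_append, take_append_of_le_length hk, sum_append]
  push_cast
  ring

lemma prefixSumsLt_rotate_iff (hs : l.sum < l.length) (hr : r ≤ l.length) :
    PrefixSumsLt (l.rotate r) ↔
      ∀ t, 0 < t → t ≤ l.length → cyclicExcess l (r + t) < cyclicExcess l r := by
  simp only [PrefixSumsLt, cyclicExcess]
  constructor
  · intro h t ht htl
    have := sum_take_rotate_add hr htl
    have := h t ht
    omega
  · intro h t ht
    by_cases htl : t ≤ l.length
    · have := sum_take_rotate_add hr htl
      have := h t ht htl
      omega
    · rw [take_of_length_le (by simp only [length_rotate]; omega), (l.rotate_perm r).sum_eq]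
      omega

theorem exists_prefixSumsLt_rotate (hs : l.sum + 1 = l.length) :
    ∃ r < l.length, PrefixSumsLt (l.rotate r) := by
  -- the last maximum of the excess over one period
  obtain ⟨r, hr, hmax⟩ := Finset.exists_max_image (Finset.range l.length)
    (fun j => toLex (cyclicExcess l j, j)) ⟨0, Finset.mem_range.mpr (by omega)⟩
  simp only [Finset.mem_range, Prod.Lex.toLex_le_toLex] at hr hmax
  refine ⟨r, hr, (prefixSumsLt_rotate_iff (by omega) hr.le).mpr fun t ht htl => ?_⟩
  rcases lt_or_ge (r + t) l.length with hrt | hrt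
  · have := hmax (r + t) hrt
    omega
  · have := hmax (r + t - l.length) (by omega)
    have hshift := cyclicExcess_length_add (l := l) (k := r + t - l.length) (by omega)
    rw [Nat.add_sub_cancel' hrt] at hshift
    omega

theorem eq_zero_of_prefixSumsLt_rotate (hs : l.sum + 1 = l.length) (h₀ : PrefixSumsLt l)
    (hr : PrefixSumsLt (l.rotate r)) (hrl : r < l.length) : r = 0 := by
  -- otherwise `cyclicExcess l r` lies strictly between `cyclicExcess l l.length = -1` and
  -- `cyclicExcess l 0 = 0`
  by_contra hr₀
  have h₁ := (prefixSumsLt_rotate_iff (r := 0) (by omega) (by omega)).mp (by simpa using h₀) r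
    (by omega) hrl.le
  have h₂ := (prefixSumsLt_rotate_iff (by omega) hrl.le).mp hr (l.length - r) (by omega)
    (Nat.sub_le _ _)
  have h₃ := cyclicExcess_length_add (l := l) (k := 0) (Nat.zero_le _)
  have h₄ : cyclicExcess l 0 = 0 := by simp [cyclicExcess]
  rw [Nat.add_sub_cancel' hrl.le] at h₂
  rw [zero_add] at h₁
  rw [add_zero] at h₃
  omega

end CycleLemma

lemma eq_of_prefixSumsLt_of_rotate_eq_rotate {g g' : List ℕ} {r r' : ℕ}
    (hs : g.sum + 1 = g.length) (hg : PrefixSumsLt g) (hg' : PrefixSumsLt g')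
    (hr : r < g.length) (hr' : r' < g.length) (h : g.rotate r = g'.rotate r') :
    g = g' ∧ r = r' := by
  have hlen : g'.length = g.length := by simpa using congrArg List.length h.symm
  have hsum : g'.sum = g.sum := by
    rw [← (g.rotate_perm r).sum_eq, h, (g'.rotate_perm r').sum_eq]
  wlog hle : r' ≤ r generalizing g g' r r'
  · obtain ⟨h₁, h₂⟩ :=
      this (by omega) hg' hg (by omega) (by omega) h.symm hlen.symm hsum.symm (by omega)
    exact ⟨h₁.symm, h₂.symm⟩
  have hshift : g.rotate (r - r') = g' := by
    rw [← List.rotate_eq_rotate (n := r'), List.rotate_rotate, Nat.sub_add_cancel hle, h]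
  have := eq_zero_of_prefixSumsLt_rotate hs hg (hshift ▸ hg') (by omega)
  obtain rfl : r = r' := by omega
  simpa using hshift

theorem natCard_eq_natCard_prefixSumsLt_mul {P : List ℕ → Prop} {n : ℕ}
    (hrot : ∀ a r, P a → P (a.rotate r)) (hP : ∀ a, P a → a.length = n + 1 ∧ a.sum = n) :
    Nat.card {a // P a} = Nat.card {a // PrefixSumsLt a ∧ P a} * (n + 1) := by
  rw [← Nat.card_fin (n + 1), ← Nat.card_prod]
  refine (Nat.card_eq_of_bijective (fun p => ⟨p.1.1.rotate p.2, hrot _ _ p.1.2.2⟩)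
    ⟨?_, ?_⟩).symm
  · rintro ⟨⟨g, hg, hPg⟩, r⟩ ⟨⟨g', hg', _⟩, r'⟩ hfg
    obtain ⟨hlen, hsum⟩ := hP g hPg
    have hrot_eq : g.rotate r = g'.rotate r' := congrArg Subtype.val hfg
    obtain ⟨rfl, hrr'⟩ := eq_of_prefixSumsLt_of_rotate_eq_rotate (by omega) hg hg'
      (by omega) (by omega) hrot_eq
    rw [Fin.ext hrr']
  · rintro ⟨a, hPa⟩
    obtain ⟨hlen, hsum⟩ := hP a hPa
    obtain ⟨k, hk, hgood⟩ := exists_prefixSumsLt_rotate (l := a) (by omega)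
    rcases Nat.eq_zero_or_pos k with rfl | hk₀
    · exact ⟨(⟨a, by simpa using hgood, hPa⟩, 0), by simp⟩
    · refine ⟨(⟨a.rotate k, hgood, hrot _ _ hPa⟩, ⟨n + 1 - k, by omega⟩), ?_⟩
      simp only [Subtype.mk.injEq, List.rotate_rotate]
      rw [Nat.add_sub_cancel' (by omega), ← hlen, List.rotate_length]

lemma PrefixSumsLt.exists_zero_cons_eq {a : List ℕ} (h : PrefixSumsLt a) (ha : a ≠ []) :
    ∃ c, 0 :: c = a := by
  obtain ⟨b, c, rfl⟩ := List.exists_cons_of_ne_nil ha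
  have := h 1 Nat.one_pos
  exact ⟨c, by simp_all⟩

lemma prefixSumsLt_zero_cons_iff {c : List ℕ} :
    PrefixSumsLt (0 :: c) ↔ ∀ k, (c.take k).sum ≤ k := by
  constructor
  · intro h k
    have := h (k + 1) k.succ_pos
    simp only [List.take_succ_cons, List.sum_cons, zero_add] at this
    omega
  · rintro h (_ | k) hk
    · omega
    · simp only [List.take_succ_cons, List.sum_cons, zero_add]
      exact Nat.lt_succ_of_le (h k)

section WordOfRuns

open List

/-- The word `N E^{c₀} N E^{c₁} ⋯ N E^{c_{k-1}}`. -/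
def wordOfRuns (c : List ℕ) : List Bool :=
  c.flatMap fun a => true :: replicate a false

@[simp] lemma wordOfRuns_nil : wordOfRuns [] = [] := rfl

@[simp] lemma wordOfRuns_cons (a : ℕ) (c : List ℕ) :
    wordOfRuns (a :: c) = true :: (replicate a false ++ wordOfRuns c) := rfl

lemma count_true_wordOfRuns (c : List ℕ) : (wordOfRuns c).count true = c.length := by
  induction c with
  | nil => rfl
  | cons a c ih => simp [count_replicate, ih]

lemma count_false_wordOfRuns (c : List ℕ) : (wordOfRuns c).count false = c.sum := by
  induction c with
  | nil => rfl
  | cons a c ih => simp [ih]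

lemma splitOnP_replicate_append_wordOfRuns (k : ℕ) (c : List ℕ) :
    (replicate k false ++ wordOfRuns c).splitOnP (fun b => b) =
      (k :: c).map (replicate · false) := by
  induction c generalizing k with
  | nil => simpa using splitOnP_eq_singleton (by simp)
  | cons a c ih =>
    rw [wordOfRuns_cons, splitOnP_append_cons_of_forall_mem (by simp) _ rfl, ih]
    rfl

lemma splitOnP_wordOfRuns (c : List ℕ) :
    (wordOfRuns c).splitOnP (fun b => b) = (0 :: c).map (replicate · false) := by
  simpa using splitOnP_replicate_append_wordOfRuns 0 c

lemma wordOfRuns_injective : Function.Injective wordOfRuns := by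
  intro c c' h
  have := congrArg (fun w => (w.splitOnP (fun b => b)).map length) h
  simpa [splitOnP_wordOfRuns, Function.comp_def] using this

lemma eRuns_wordOfRuns (c : List ℕ) : eRuns (wordOfRuns c) = c.filter (· ≠ 0) := by
  simp [eRuns, splitOnP_wordOfRuns, Function.comp_def]

lemma exists_eq_replicate_append_wordOfRuns (w : List Bool) :
    ∃ k c, w = replicate k false ++ wordOfRuns c := by
  induction w with
  | nil => exact ⟨0, [], rfl⟩
  | cons b w ih =>
    obtain ⟨k, c, rfl⟩ := ih
    cases b
    · exact ⟨k + 1, c, rfl⟩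
    · exact ⟨0, k :: c, rfl⟩

end WordOfRuns

def EastExcessLE (s : ℕ) (w : List Bool) : Prop :=
  ∀ i, (w.take i).count false ≤ (w.take i).count true + s

namespace EastExcessLE

open List

lemma cons_true {s : ℕ} {w : List Bool} :
    EastExcessLE s (true :: w) ↔ EastExcessLE (s + 1) w := by
  constructor
  · intro h i
    have := h (i + 1)
    simp only [take_succ_cons, count_cons_self, count_cons_of_ne Bool.false_ne_true.symm] at this
    omega
  · rintro h (_ | i)
    · simp
    · have := h i
      simp only [take_succ_cons, count_cons_self, count_cons_of_ne Bool.false_ne_true.symm]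
      omega

lemma cons_false {s : ℕ} {w : List Bool} :
    EastExcessLE s (false :: w) ↔ 1 ≤ s ∧ EastExcessLE (s - 1) w := by
  constructor
  · intro h
    refine ⟨by simpa using h 1, fun i => ?_⟩
    have := h (i + 1)
    simp only [take_succ_cons, count_cons_self, count_cons_of_ne Bool.false_ne_true] at this
    omega
  · rintro ⟨hs, h⟩ (_ | i)
    · simp
    · have := h i
      simp only [take_succ_cons, count_cons_self, count_cons_of_ne Bool.false_ne_true]
      omega

lemma replicate_false_append {s a : ℕ} {w : List Bool} :
    EastExcessLE s (replicate a false ++ w) ↔ a ≤ s ∧ EastExcessLE (s - a) w := by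
  induction a generalizing s with
  | zero => simp
  | succ a ih =>
    rw [replicate_succ, cons_append, cons_false, ih, Nat.sub_sub, Nat.add_comm 1 a]
    exact ⟨fun ⟨_, _, h⟩ => ⟨by omega, h⟩,
      fun ⟨_, h⟩ => ⟨by omega, by omega, h⟩⟩

end EastExcessLE

lemma sum_take_cons_le_iff {a s : ℕ} {c : List ℕ} :
    (∀ k, ((a :: c).take k).sum ≤ k + s) ↔
      a ≤ s + 1 ∧ ∀ k, (c.take k).sum ≤ k + (s + 1 - a) := by
  constructor
  · intro h
    refine ⟨by simpa [Nat.add_comm] using h 1, fun k => ?_⟩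
    have := h (k + 1)
    simp only [List.take_succ_cons, List.sum_cons] at this
    omega
  · rintro ⟨ha, h⟩ (_ | k)
    · simp
    · have := h k
      simp only [List.take_succ_cons, List.sum_cons]
      omega

lemma eastExcessLE_wordOfRuns_iff {s : ℕ} {c : List ℕ} :
    EastExcessLE s (wordOfRuns c) ↔ ∀ k, (c.take k).sum ≤ k + s := by
  induction c generalizing s with
  | nil => simp [EastExcessLE]
  | cons a c ih =>
    rw [wordOfRuns_cons, EastExcessLE.cons_true, EastExcessLE.replicate_false_append, ih,
      sum_take_cons_le_iff]

lemma isDyckWord_wordOfRuns_iff {n : ℕ} {c : List ℕ} :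
    IsDyckWord n (wordOfRuns c) ↔ c.length = n ∧ c.sum = n ∧ ∀ k, (c.take k).sum ≤ k := by
  change _ ∧ _ ∧ EastExcessLE 0 _ ↔ _
  rw [eastExcessLE_wordOfRuns_iff, ← List.count_true_add_count_false, count_true_wordOfRuns,
    count_false_wordOfRuns]
  simp only [add_zero]
  constructor <;> rintro ⟨h₁, h₂, h₃⟩ <;> exact ⟨by omega, by omega, h₃⟩

lemma IsDyckWord.mem_range_wordOfRuns {n : ℕ} {w : List Bool} (hw : IsDyckWord n w) :
    w ∈ Set.range wordOfRuns := by
  obtain ⟨k, c, rfl⟩ := exists_eq_replicate_append_wordOfRuns w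
  have hpre : EastExcessLE 0 (List.replicate k false ++ wordOfRuns c) := hw.2.2
  obtain ⟨hk, -⟩ := EastExcessLE.replicate_false_append.mp hpre
  obtain rfl : k = 0 := Nat.le_zero.mp hk
  exact ⟨c, rfl⟩

lemma Multiset.eq_add_replicate_zero_iff {s m : Multiset ℕ} {N : ℕ} (hs : 0 ∉ s)
    (hN : card s ≤ N) :
    m = s + replicate (N - card s) 0 ↔ card m = N ∧ m.filter (· ≠ 0) = s := by
  constructor
  · rintro rfl
    refine ⟨by rw [card_add, card_replicate]; omega, ?_⟩
    rw [filter_add, filter_eq_self.mpr fun a ha => ne_of_mem_of_not_mem ha hs,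
      filter_eq_nil.mpr fun a ha => by simp [eq_of_mem_replicate ha], add_zero]
  · rintro ⟨hm, hf⟩
    have hsplit := filter_add_not (· ≠ 0) m
    rw [hf] at hsplit
    have hcard := congrArg card hsplit
    rw [card_add] at hcard
    conv_lhs => rw [← hsplit]
    congr 1
    exact eq_replicate.mpr ⟨by omega, fun b hb => by simpa using (mem_filter.mp hb).2⟩

namespace Nat.Partition

variable {n : ℕ} (lam : Nat.Partition n)

lemma card_parts_le : Multiset.card lam.parts ≤ n := by
  simpa [lam.parts_sum] using Multiset.card_nsmul_le_sum (a := 1) fun _ hx => lam.parts_pos hx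

/-- The `n + 1` East runs of a Dyck path of type `lam`: one before the first North step (always
empty) and one after each North step. -/
def paddedParts : Multiset ℕ :=
  lam.parts + Multiset.replicate (n + 1 - Multiset.card lam.parts) 0

lemma card_paddedParts : Multiset.card lam.paddedParts = n + 1 := by
  have := lam.card_parts_le
  simp only [paddedParts, Multiset.card_add, Multiset.card_replicate]
  omega

lemma sum_paddedParts : lam.paddedParts.sum = n := by
  simp [paddedParts, lam.parts_sum]

lemma count_paddedParts_zero :
    lam.paddedParts.count 0 = n + 1 - Multiset.card lam.parts := by
  simp [paddedParts, Multiset.count_eq_zero.mpr fun h => (lam.parts_pos h).ne rfl]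

lemma count_paddedParts_of_ne_zero {x : ℕ} (hx : x ≠ 0) :
    lam.paddedParts.count x = lam.parts.count x := by
  simp [paddedParts, Multiset.count_replicate, hx.symm]

lemma le_of_mem_paddedParts {x : ℕ} (hx : x ∈ lam.paddedParts) : x ≤ n := by
  rcases Multiset.mem_add.mp hx with h | h
  · exact lam.le_of_mem_parts h
  · simp [Multiset.eq_of_mem_replicate h]

lemma coe_zero_cons_eq_paddedParts_iff {c : List ℕ} :
    ((0 :: c : List ℕ) : Multiset ℕ) = lam.paddedParts ↔
      c.length = n ∧ (c.filter (· ≠ 0) : Multiset ℕ) = lam.parts := by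
  rw [paddedParts, Multiset.eq_add_replicate_zero_iff (fun h => (lam.parts_pos h).ne rfl)
    (by have := lam.card_parts_le; omega)]
  simp

end Nat.Partition

lemma isDyckWord_wordOfRuns_and_iff {n : ℕ} (lam : Nat.Partition n) {c : List ℕ} :
    IsDyckWord n (wordOfRuns c) ∧ (eRuns (wordOfRuns c) : Multiset ℕ) = lam.parts ↔
      PrefixSumsLt (0 :: c) ∧ ((0 :: c : List ℕ) : Multiset ℕ) = lam.paddedParts := by
  rw [isDyckWord_wordOfRuns_iff, eRuns_wordOfRuns, prefixSumsLt_zero_cons_iff,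
    lam.coe_zero_cons_eq_paddedParts_iff]
  constructor
  · rintro ⟨⟨hlen, -, hpre⟩, hparts⟩
    exact ⟨hpre, hlen, hparts⟩
  · rintro ⟨hpre, hlen, hparts⟩
    have hsum := congrArg Multiset.sum (lam.coe_zero_cons_eq_paddedParts_iff.mpr ⟨hlen, hparts⟩)
    rw [lam.sum_paddedParts, Multiset.sum_coe, List.sum_cons, zero_add] at hsum
    exact ⟨⟨hlen, hsum, hpre⟩, hparts⟩

lemma natCard_dyckWords_eq {n : ℕ} (lam : Nat.Partition n) :
    Nat.card {w : List Bool // IsDyckWord n w ∧ (eRuns w : Multiset ℕ) = lam.parts} =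
      Nat.card {a : List ℕ // PrefixSumsLt a ∧ (a : Multiset ℕ) = lam.paddedParts} := by
  rw [← wordOfRuns_injective.natCard_subtype_comp fun w hw => hw.1.mem_range_wordOfRuns]
  simp_rw [isDyckWord_wordOfRuns_and_iff]
  refine List.cons_injective.natCard_subtype_comp
    (P := fun a => PrefixSumsLt a ∧ (a : Multiset ℕ) = lam.paddedParts)
    fun a ⟨hpre, ha⟩ => hpre.exists_zero_cons_eq ?_
  rintro rfl
  simpa [lam.card_paddedParts] using congrArg Multiset.card ha

lemma natCard_lists_paddedParts_eq_mul {n : ℕ} (lam : Nat.Partition n) :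
    Nat.card {a : List ℕ // (a : Multiset ℕ) = lam.paddedParts} =
      Nat.card {a : List ℕ // PrefixSumsLt a ∧ (a : Multiset ℕ) = lam.paddedParts} *
        (n + 1) :=
  natCard_eq_natCard_prefixSumsLt_mul
    (fun a r ha => (Multiset.coe_eq_coe.mpr (a.rotate_perm r)).trans ha)
    fun a ha => ⟨by rw [← Multiset.coe_card, ha, lam.card_paddedParts],
      by rw [← Multiset.sum_coe, ha, lam.sum_paddedParts]⟩

lemma natCard_lists_paddedParts_eq_multinomial {n : ℕ} (lam : Nat.Partition n) :
    Nat.card {a : List ℕ // (a : Multiset ℕ) = lam.paddedParts} =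
      Nat.multinomial (Finset.univ : Finset (Option (Fin n)))
        (fun o => o.elim (n + 1 - lam.parts.card) (fun j => lam.parts.count ((j : ℕ) + 1))) := by
  -- `none ↦ 0`, `some j ↦ j + 1`
  let e : Option (Fin n) ↪ ℕ := (finSuccEquiv n).symm.toEmbedding.trans Fin.valEmbedding
  rw [Multiset.natCard_lists_eq_multinomial (s := Finset.univ.map e) fun x hx =>
    Finset.mem_map.mpr ⟨finSuccEquiv n ⟨x, Nat.lt_succ_of_le (lam.le_of_mem_paddedParts hx)⟩,
      Finset.mem_univ _, by simp [e]⟩, Nat.multinomial_map]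
  congr 1
  funext o
  cases o with
  | none => simp [e, lam.count_paddedParts_zero]
  | some j => simp [e, lam.count_paddedParts_of_ne_zero]

/-- for a partition `λ ⊢ n`, the number of Dyck paths of size `n` whose
multiset of East-run lengths equals the multiset of parts of `λ` is the Kreweras number
`Krew(λ) = (1/(n+1)) · multinomial(n+1; n+1-ℓ(λ), m_1(λ), ..., m_n(λ))`. -/
theorem kreweras_counts_dyck_paths (n : ℕ) (lam : Nat.Partition n) :
    (Nat.card {w : List Bool //
        IsDyckWord n w ∧ Multiset.ofList (eRuns w) = lam.parts} : ℚ)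
      = (1 / ((n : ℚ) + 1)) *
          (Nat.multinomial (Finset.univ : Finset (Option (Fin n)))
            (fun o => o.elim (n + 1 - lam.parts.card)
              (fun j => lam.parts.count ((j : ℕ) + 1))) : ℚ) := by
  rw [← natCard_lists_paddedParts_eq_multinomial, natCard_lists_paddedParts_eq_mul,
    natCard_dyckWords_eq]
  push_cast
  field_simp
end

section
/- Let m_λ denote the monomial symmetric polynomial in variables z_1,...,z_{k-1}, let λ be a partition with |λ| ≤ k-1, and let η_{k,i} be the operator replacing variables (z_1,...,z_{k-1}) by (z_1,...,z_{i-1},z_{i+1},...,z_k). Then ∑_{i=1}^k z_i^{k-1-|λ|} η_{k,i}(m_λ) / ∏_{j≠i}(z_j - z_i) = (-1)^{k-1-ℓ(λ)} · multinomial(ℓ(λ); m_1(λ), m_2(λ), ...), as rational functions in z_1,...,z_k, where m_j(λ) is the multiplicity of j in λ. -/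
/-!
Write `m_s` for the monomial symmetric polynomial of an arbitrary multiset `s` of positive
integers and `Φ(s)` for the left-hand side with `m_λ` replaced by `m_s`. Sorting the monomials of
`m_s(z)` by the exponent `p` of `z i` gives the branching rule
`m_s(z) = m_s(z ∘ i.succAbove) + ∑_p (z i)^p m_{s - p}(z ∘ i.succAbove)`, `p` running over the
distinct parts of `s`. Substituted into `Φ(s)`, the term with `m_s(z)` is `m_s(z)` times a Lagrange
sum `∑_i (z i)^r / ∏_{j ≠ i} (z j - z i)` with `r < d`, which vanishes, so `Φ(s) = -∑_p Φ(s - p)`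
and `Φ(0) = (-1)^d`. The number of distinct arrangements of `s` (the multinomial coefficient)
satisfies the matching recursion `∑_p #(s - p) = #s`.
-/

/-- The monomial symmetric polynomial `m_λ` evaluated at `d` variables: the sum of all
distinct monomials `z^α` whose multiset of nonzero exponents is the multiset of parts
of `λ`. -/
def mSymEval {F : Type*} [CommRing F] {m : ℕ} (lam : Nat.Partition m) {d : ℕ}
    (z : Fin d → F) : F :=
  ∑ α ∈ (Fintype.piFinset fun _ : Fin d => Finset.range (m + 1)).filter
      (fun α => (Multiset.ofList (List.ofFn α)).filter (· ≠ 0) = lam.parts),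
    ∏ i, z i ^ α i

open Finset

namespace Multiset
variable {α : Type*} [DecidableEq α]

theorem card_mul_countPerms_erase {s : Multiset α} {a : α} (ha : a ∈ s) :
    card s * (s.erase a).countPerms = s.count a * s.countPerms := by
  have hfilter : (s.erase a).filter (a ≠ ·) = s.filter (a ≠ ·) := by
    conv_rhs => rw [← cons_erase ha]
    simp
  obtain ⟨n, hn⟩ : ∃ n, card s = n + 1 :=
    Nat.exists_eq_add_one.2 (card_pos_iff_exists_mem.2 ⟨a, ha⟩)
  obtain ⟨k, hk⟩ : ∃ k, s.count a = k + 1 := Nat.exists_eq_add_one.2 (count_pos.2 ha)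
  rw [countPerms_filter_ne a s, countPerms_filter_ne a (s.erase a), hfilter, card_erase_of_mem ha,
    count_erase_self, hn, hk, Nat.pred_succ, Nat.add_sub_cancel, ← mul_assoc, ← mul_assoc,
    Nat.add_one_mul_choose_eq, mul_comm (k + 1)]

theorem sum_countPerms_erase {s : Multiset α} (hs : s ≠ 0) :
    ∑ a ∈ s.toFinset, (s.erase a).countPerms = s.countPerms := by
  refine Nat.eq_of_mul_eq_mul_left (card_pos.2 hs) ?_
  rw [Finset.mul_sum,
    Finset.sum_congr rfl fun a ha => card_mul_countPerms_erase (mem_toFinset.1 ha),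
    ← Finset.sum_mul, toFinset_sum_count_eq]

theorem card_le_sum_of_zero_notMem {s : Multiset ℕ} (hs : 0 ∉ s) : card s ≤ s.sum := by
  simpa using card_nsmul_le_sum (a := 1) fun x hx =>
    Nat.one_le_iff_ne_zero.2 (ne_of_mem_of_not_mem hx hs)

theorem countPerms_eq_multinomial (s : Multiset α) :
    s.countPerms = Nat.multinomial s.toFinset s.count := by
  rw [countPerms, Finsupp.multinomial_eq, toFinsupp_support]
  rfl

end Multiset

section Lagrange
variable {F : Type*} [Field F] {d : ℕ}
open Polynomial

theorem sum_pow_div_prod_sub {z : Fin (d + 1) → F} (hz : Function.Injective z) {r : ℕ}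
    (hr : r ≤ d) :
    ∑ i, z i ^ r / ∏ j ∈ univ.erase i, (z j - z i) = if r = d then (-1) ^ d else 0 := by
  have hcoeff := Lagrange.coeff_eq_sum (P := X ^ r) hz.injOn
    (by rw [degree_X_pow, card_univ, Fintype.card_fin]; exact_mod_cast Nat.lt_succ_of_le hr)
  have hsign (i : Fin (d + 1)) :
      ∏ j ∈ univ.erase i, (z j - z i) = (-1) ^ d * ∏ j ∈ univ.erase i, (z i - z j) := by
    have hcard : #(univ.erase i) = d := by simp
    rw [show (-1 : F) ^ d = (-1) ^ #(univ.erase i) by rw [hcard], ← prod_neg]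
    exact prod_congr rfl fun j _ => (neg_sub _ _).symm
  simp_rw [hsign, div_mul_eq_div_div_swap, ← Finset.sum_div]
  simp only [card_univ, Fintype.card_fin, Nat.add_sub_cancel, coeff_X_pow, eval_pow, eval_X]
    at hcoeff
  rw [← hcoeff]
  obtain rfl | hrd := eq_or_ne r d
  · rw [if_pos rfl, if_pos rfl, one_div, ← inv_pow, inv_neg_one]
  · rw [if_neg hrd, if_neg hrd.symm, zero_div]

end Lagrange

section MonomialSymmetric
variable {n : ℕ} {s : Multiset ℕ}

def nonzeroEntries (α : Fin n → ℕ) : Multiset ℕ := (Multiset.ofList (List.ofFn α)).filter (· ≠ 0)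

variable (n) in
def monomialExponents (s : Multiset ℕ) : Finset (Fin n → ℕ) :=
  {α ∈ Fintype.piFinset fun _ => range (s.sum + 1) | nonzeroEntries α = s}

def mSym {R : Type*} [CommSemiring R] (s : Multiset ℕ) (z : Fin n → R) : R :=
  ∑ α ∈ monomialExponents n s, ∏ i, z i ^ α i

theorem mSymEval_eq_mSym {R : Type*} [CommRing R] {m : ℕ} (lam : Nat.Partition m)
    (z : Fin n → R) : mSymEval lam z = mSym lam.parts z := by
  simp only [mSymEval, mSym, monomialExponents, nonzeroEntries, lam.parts_sum]

theorem mem_nonzeroEntries {α : Fin n → ℕ} {p : ℕ} :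
    p ∈ nonzeroEntries α ↔ p ≠ 0 ∧ ∃ j, α j = p := by
  simp [nonzeroEntries, and_comm]

theorem mem_monomialExponents {α : Fin n → ℕ} :
    α ∈ monomialExponents n s ↔ nonzeroEntries α = s := by
  refine ⟨fun h => (mem_filter.1 h).2,
    fun h => mem_filter.2 ⟨Fintype.mem_piFinset.2 fun j => ?_, h⟩⟩
  rw [mem_range, Nat.lt_succ_iff]
  by_cases hj : α j = 0
  · exact hj ▸ Nat.zero_le _
  · exact Multiset.le_sum_of_mem (h ▸ mem_nonzeroEntries.2 ⟨hj, j, rfl⟩)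

theorem monomialExponents_zero : monomialExponents n 0 = {0} := by
  ext α
  simp [mem_monomialExponents, nonzeroEntries, funext_iff]

theorem mSym_zero {R : Type*} [CommSemiring R] (z : Fin n → R) : mSym 0 z = 1 := by
  simp [mSym, monomialExponents_zero]

theorem coe_ofFn_insertNth {α : Type*} (i : Fin (n + 1)) (p : α) (f : Fin n → α) :
    (List.ofFn (i.insertNth p f) : Multiset α) = p ::ₘ (List.ofFn f : Multiset α) := by
  rw [← Fin.univ_val_map, ← Fin.univ_val_map, Fin.univ_succAbove n i, cons_val,
    Multiset.map_cons, map_val, Multiset.map_map]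
  simp [Function.comp_def]

theorem nonzeroEntries_insertNth (i : Fin (n + 1)) (p : ℕ) (α : Fin n → ℕ) :
    nonzeroEntries (i.insertNth p α)
      = if p = 0 then nonzeroEntries α else p ::ₘ nonzeroEntries α := by
  rw [nonzeroEntries, nonzeroEntries, coe_ofFn_insertNth]
  split_ifs with hp
  · exact Multiset.filter_cons_of_neg _ (not_not.2 hp)
  · exact Multiset.filter_cons_of_pos _ hp

theorem sum_filter_monomialExponents_apply_eq {M : Type*} [AddCommMonoid M] (i : Fin (n + 1))
    (p : ℕ) {t : Multiset ℕ}
    (h : ∀ α : Fin n → ℕ, nonzeroEntries (i.insertNth p α) = s ↔ nonzeroEntries α = t)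
    (f : (Fin (n + 1) → ℕ) → M) :
    ∑ γ ∈ monomialExponents (n + 1) s with γ i = p, f γ
      = ∑ α ∈ monomialExponents n t, f (i.insertNth p α) := by
  have hinv {γ : Fin (n + 1) → ℕ} (hγ : γ i = p) : i.insertNth p (i.removeNth γ) = γ := by
    rw [Fin.insertNth_removeNth, ← hγ, Function.update_eq_self]
  refine sum_nbij' i.removeNth (fun α => i.insertNth p α) (fun γ hγ => ?_) (fun α hα => ?_)
    (fun γ hγ => hinv (mem_filter.1 hγ).2) (fun α _ => Fin.removeNth_insertNth _ _ _)
    (fun γ hγ => by rw [hinv (mem_filter.1 hγ).2])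
  · obtain ⟨hγ, hγi⟩ := mem_filter.1 hγ
    rwa [mem_monomialExponents, ← h, hinv hγi, ← mem_monomialExponents]
  · simp_all [mem_monomialExponents]

theorem mSym_eq_add_sum {R : Type*} [CommSemiring R] (i : Fin (n + 1)) (hs : 0 ∉ s)
    (z : Fin (n + 1) → R) :
    mSym s z = mSym s (z ∘ i.succAbove)
      + ∑ p ∈ s.toFinset, z i ^ p * mSym (s.erase p) (z ∘ i.succAbove) := by
  have hmaps : ∀ γ ∈ monomialExponents (n + 1) s, γ i ∈ insert 0 s.toFinset := by
    intro γ hγ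
    rw [mem_insert, Multiset.mem_toFinset, ← mem_monomialExponents.1 hγ, mem_nonzeroEntries]
    tauto
  have hprod (p : ℕ) (α : Fin n → ℕ) :
      ∏ j, z j ^ i.insertNth p α j = z i ^ p * ∏ t, (z ∘ i.succAbove) t ^ α t := by
    simp [Fin.prod_univ_succAbove _ i]
  rw [mSym, ← sum_fiberwise_of_maps_to hmaps, sum_insert (by simpa using hs)]
  congr 1
  · rw [sum_filter_monomialExponents_apply_eq i 0 (t := s) (by simp [nonzeroEntries_insertNth])]
    simp [hprod, mSym]
  · refine sum_congr rfl fun p hp => ?_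
    have hps := Multiset.mem_toFinset.1 hp
    have hp0 : p ≠ 0 := fun h => hs (h ▸ hps)
    rw [sum_filter_monomialExponents_apply_eq i p (t := s.erase p), mSym, mul_sum]
    · simp [hprod]
    · intro α
      rw [nonzeroEntries_insertNth, if_neg hp0]
      exact ⟨fun h => h ▸ (Multiset.erase_cons_head _ _).symm,
        fun h => h ▸ Multiset.cons_erase hps⟩

end MonomialSymmetric

section LagrangeSum
variable {F : Type*} [Field F] {d : ℕ}

def lagrangeSum (z : Fin (d + 1) → F) (s : Multiset ℕ) : F :=
  ∑ i, z i ^ (d - s.sum) * mSym s (z ∘ i.succAbove) / ∏ j ∈ univ.erase i, (z j - z i)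

variable {z : Fin (d + 1) → F} {s : Multiset ℕ}

theorem lagrangeSum_zero (hz : Function.Injective z) : lagrangeSum z 0 = (-1) ^ d := by
  simpa [lagrangeSum, mSym_zero] using sum_pow_div_prod_sub hz le_rfl

theorem lagrangeSum_eq_neg_sum_erase (hz : Function.Injective z) (hs0 : 0 ∉ s) (hs : s ≠ 0)
    (hsd : s.sum ≤ d) :
    lagrangeSum z s = -∑ p ∈ s.toFinset, lagrangeSum z (s.erase p) := by
  set P : Fin (d + 1) → F := fun i => ∏ j ∈ univ.erase i, (z j - z i)
  have hterm (i : Fin (d + 1)) : z i ^ (d - s.sum) * mSym s (z ∘ i.succAbove) / P i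
      = mSym s z * (z i ^ (d - s.sum) / P i) - ∑ p ∈ s.toFinset,
          z i ^ (d - (s.erase p).sum) * mSym (s.erase p) (z ∘ i.succAbove) / P i := by
    rw [eq_sub_of_add_eq (mSym_eq_add_sum i hs0 z).symm, mul_sub, sub_div, mul_sum, sum_div]
    congr 1
    · ring
    refine sum_congr rfl fun p hp => ?_
    have hsum := Multiset.sum_erase (Multiset.mem_toFinset.1 hp)
    rw [show d - (s.erase p).sum = d - s.sum + p by omega, pow_add]
    ring
  have hexp : d - s.sum ≠ d := by
    have := (Multiset.card_pos.2 hs).trans_le (Multiset.card_le_sum_of_zero_notMem hs0)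
    omega
  rw [lagrangeSum, sum_congr rfl fun i _ => hterm i, sum_sub_distrib, ← mul_sum,
    sum_pow_div_prod_sub hz (Nat.sub_le _ _), if_neg hexp, mul_zero, zero_sub, sum_comm]
  rfl

theorem lagrangeSum_eq_countPerms (hz : Function.Injective z) (hs0 : 0 ∉ s) (hsd : s.sum ≤ d) :
    lagrangeSum z s = (-1) ^ (d - Multiset.card s) * s.countPerms := by
  induction s using Multiset.strongInductionOn with | _ s ih =>
  obtain rfl | hs := eq_or_ne s 0
  · simp [lagrangeSum_zero hz]
  have hcard := (Multiset.card_le_sum_of_zero_notMem hs0).trans hsd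
  rw [lagrangeSum_eq_neg_sum_erase hz hs0 hs hsd, ← Multiset.sum_countPerms_erase hs,
    Nat.cast_sum, mul_sum, ← sum_neg_distrib]
  refine sum_congr rfl fun p hp => ?_
  have hps := Multiset.mem_toFinset.1 hp
  rw [ih _ (Multiset.erase_lt.2 hps) (fun h => hs0 (Multiset.mem_of_mem_erase h))
      (by have := Multiset.sum_erase hps; omega), Multiset.card_erase_of_mem hps,
    Nat.pred_eq_sub_one, show d - (Multiset.card s - 1) = d - Multiset.card s + 1 by
      have := Multiset.card_pos.2 hs; omega, pow_succ]
  ring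

end LagrangeSum

/-- here `k = d + 1`: for a partition `λ` with `|λ| ≤ k - 1` and distinct
`z 1, ..., z k`, with `η_{k,i}` substituting the variable list omitting `z i`,
`∑_i z i^(k-1-|λ|) η_{k,i}(m_λ) / ∏_{j≠i}(z j - z i)
  = (-1)^(k-1-ℓ(λ)) multinomial(ℓ(λ); m_1(λ), m_2(λ), ...)`. -/
theorem monomial_symmetric_sum {F : Type*} [Field F] {d m : ℕ} (hm : m ≤ d)
    (lam : Nat.Partition m) (z : Fin (d + 1) → F) (hz : Function.Injective z) :
    ∑ i : Fin (d + 1),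
        z i ^ (d - m) * mSymEval lam (z ∘ i.succAbove) /
          ∏ j ∈ Finset.univ.erase i, (z j - z i)
      = (-1 : F) ^ (d - lam.parts.card) *
          (Nat.multinomial lam.parts.toFinset (fun j => lam.parts.count j) : F) := by
  have h0 : 0 ∉ lam.parts := fun h => (lam.parts_pos h).false
  rw [← Multiset.countPerms_eq_multinomial,
    ← lagrangeSum_eq_countPerms hz h0 (lam.parts_sum.le.trans hm)]
  simp only [lagrangeSum, mSymEval_eq_mSym, lam.parts_sum]
end

section
/- For a partition λ of k-1 and n ≥ k-1, the identity Krew(λ+(1^{ℓ(λ)})) · multinomial(n; λ+(1^{n+1-k})) = (n!/k!) · ∑_{α ~ λ} (k-1+ℓ(α))! / (ℓ(α)! · ∏_{i≥1}(α_i+1)!) holds, where the sum is over all compositions α that are rearrangements of λ, λ+(1^{ℓ(λ)}) adds 1 to each of the first ℓ(λ) parts, and λ+(1^{n+1-k}) denotes the partition of n obtained by adding 1 to the first n+1-k parts (padding λ with zeros). -/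
/-!
Write `ℓ = ℓ(λ)` and `N = k - 1 + ℓ`. Both sides equal
`N! n! / (k! ∏_j m_j(λ)! ∏_i (λ_i + 1)!)`. On the left, `N + 1 - ℓ = k` turns the Kreweras
number into `N! / (k! ∏_j m_j(λ)!)`, and the parts `1` of `λ + (1^{n+1-k})` contribute
`1! = 1` to the multinomial. On the right every summand equals `N! / (ℓ! ∏_i (λ_i + 1)!)`,
and `λ` has `ℓ! / ∏_j m_j(λ)!` rearrangements; this count is proved by sorting the words
according to their first letter.
-/

open Finset Nat

namespace Multiset

variable {β : Type*} [DecidableEq β]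

theorem prod_factorial_count_cons {s : Finset β} {a : β} (ha : a ∈ s) (m : Multiset β) :
    ∏ j ∈ s, (count j (a ::ₘ m))! = (count a m + 1) * ∏ j ∈ s, (count j m)! := by
  rw [← mul_prod_erase s _ ha, ← mul_prod_erase s _ ha, count_cons_self, factorial_succ,
    mul_assoc]
  congr 2
  exact prod_congr rfl fun j hj => by rw [count_cons_of_ne (ne_of_mem_erase hj)]

theorem prod_count_eq_prod_toFinset {M : Type*} [CommMonoid M] {g : ℕ → M} (hg : g 0 = 1)
    {m : Multiset β} {s : Finset β} (hs : ∀ x ∈ m, x ∈ s) :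
    ∏ j ∈ s, g (count j m) = ∏ j ∈ m.toFinset, g (count j m) :=
  (prod_subset (fun x hx => hs x (mem_toFinset.mp hx)) fun x _ hx => by
    rw [count_eq_zero_of_notMem (mt mem_toFinset.mpr hx), hg]).symm

theorem count_map_add_one (m : Multiset ℕ) (j : ℕ) :
    count (j + 1) (m.map (· + 1)) = count j m :=
  count_map_eq_count' _ _ (add_left_injective 1) j

end Multiset

theorem Nat.multinomial_univ_option_count {m : Multiset ℕ} {N : ℕ} (hm : ∀ x ∈ m, x < N)
    (a : ℕ) :
    a ! * (∏ j ∈ m.toFinset, (m.count j)!) *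
        Nat.multinomial univ (fun o : Option (Fin N) => o.elim a fun j => m.count (j : ℕ))
      = (a + Multiset.card m)! := by
  have hrange : ∀ x ∈ m, x ∈ range N := fun x hx => mem_range.mpr (hm x hx)
  have := Nat.multinomial_spec univ (fun o : Option (Fin N) => o.elim a fun j => m.count (j : ℕ))
  simp only [Fintype.prod_option, Fintype.sum_option, Option.elim_none, Option.elim_some] at this
  rwa [Fin.prod_univ_eq_prod_range (fun j => (m.count j)!),
    Fin.sum_univ_eq_sum_range (m.count ·),
    Multiset.prod_count_eq_prod_toFinset factorial_zero hrange, Multiset.sum_count_eq_card hrange]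
    at this

theorem Nat.Partition.mem_Icc_of_mem_parts {n : ℕ} {p : n.Partition} {x : ℕ}
    (hx : x ∈ p.parts) : x ∈ Icc 1 n :=
  mem_Icc.mpr ⟨p.parts_pos hx, p.le_of_mem_parts hx⟩

theorem Nat.Partition.lt_add_card_of_mem_parts {n : ℕ} {p : n.Partition} {x : ℕ}
    (hx : x ∈ p.parts) : x < n + Multiset.card p.parts := by
  have := Multiset.card_pos_iff_exists_mem.mpr ⟨x, hx⟩
  have := p.le_of_mem_parts hx
  omega

theorem Fin.prod_univ_comp_eq_prod_map_ofFn {M β : Type*} [CommMonoid M] {n : ℕ} (f : β → M)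
    (α : Fin n → β) : ∏ i, f (α i) = ((Multiset.ofList (List.ofFn α)).map f).prod := by
  rw [Multiset.map_coe, Multiset.prod_coe, List.map_ofFn, List.prod_ofFn]
  rfl

section Rearrangements

open Multiset

variable {β : Type*} [DecidableEq β]

theorem card_filter_ofFn_apply_zero_eq (s : Finset β) (m : Multiset β) {b : β} (hb : b ∈ s)
    (n : ℕ) :
    #{α ∈ {α ∈ Fintype.piFinset fun _ : Fin (n + 1) => s | ofList (List.ofFn α) = m} |
        α 0 = b}
      = #{α ∈ Fintype.piFinset fun _ : Fin n => s | b ::ₘ ofList (List.ofFn α) = m} := by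
  refine card_bij' (fun α _ => Fin.tail α) (fun α _ => Fin.cons b α) ?_ ?_ ?_ ?_
  · intro α hα
    simp only [Finset.mem_filter, Fintype.mem_piFinset] at hα ⊢
    obtain ⟨⟨hs, hm⟩, h0⟩ := hα
    refine ⟨fun i => hs _, ?_⟩
    rw [← hm, List.ofFn_succ, h0]
    rfl
  · intro α hα
    simp only [Finset.mem_filter, Fintype.mem_piFinset] at hα ⊢
    refine ⟨⟨Fin.cases hb hα.1, ?_⟩, rfl⟩
    rw [← hα.2, List.ofFn_succ]
    rfl
  · intro α hα
    exact (Finset.mem_filter.mp hα).2 ▸ Fin.cons_self_tail α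
  · intro α _
    exact Fin.tail_cons _ _

theorem card_filter_ofFn_eq_mul_prod_factorial (s : Finset β) (n : ℕ) (m : Multiset β)
    (hm : card m = n) (hs : ∀ x ∈ m, x ∈ s) :
    #{α ∈ Fintype.piFinset fun _ : Fin n => s | ofList (List.ofFn α) = m}
      * ∏ j ∈ s, (count j m)! = n ! := by
  induction n generalizing m with
  | zero =>
    obtain rfl := card_eq_zero.mp hm
    simp
  | succ n ih =>
    have hfiber : ∀ b ∈ s,
        #{α ∈ Fintype.piFinset fun _ : Fin n => s | b ::ₘ ofList (List.ofFn α) = m}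
          * ∏ j ∈ s, (count j m)! = count b m * n ! := by
      intro b hb
      by_cases hbm : b ∈ m
      · obtain ⟨m', rfl⟩ := exists_cons_of_mem hbm
        simp only [cons_inj_right, prod_factorial_count_cons hb, count_cons_self]
        rw [mul_left_comm, ih m' (by simpa using hm) fun x hx => hs x (mem_cons_of_mem hx)]
      · have hne : ∀ α : Fin n → β, b ::ₘ ofList (List.ofFn α) ≠ m :=
          fun α h => hbm (h ▸ mem_cons_self b _)
        rw [filter_false_of_mem fun α _ => hne α, count_eq_zero_of_notMem hbm]
        simp
    rw [card_eq_sum_card_fiberwise (f := fun α => α 0) (t := s)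
        fun α hα => Fintype.mem_piFinset.mp (Finset.mem_filter.mp hα).1 0, sum_mul,
      sum_congr rfl fun b hb => card_filter_ofFn_apply_zero_eq s m hb n ▸ hfiber b hb, ← sum_mul,
      sum_count_eq_card hs, hm, factorial_succ]

end Rearrangements

theorem kreweras_multinomial_identity_general (k n : ℕ) (hk : 1 ≤ k)
    (lam : Nat.Partition (k - 1)) :
    ((1 / (((k - 1 + lam.parts.card : ℕ) : ℚ) + 1)) *
        (Nat.multinomial (Finset.univ : Finset (Option (Fin (k - 1 + lam.parts.card))))
          (fun o => o.elim ((k - 1 + lam.parts.card) + 1 - lam.parts.card)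
            (fun j => (lam.parts.map (· + 1)).count ((j : ℕ) + 1))) : ℚ)) *
      ((n.factorial : ℚ) /
        ((((lam.parts.map (· + 1)) + Multiset.replicate (n + 1 - k - lam.parts.card) 1).map
            Nat.factorial).prod : ℕ))
    = ((n.factorial : ℚ) / (k.factorial : ℚ)) *
        ∑ α ∈ (Fintype.piFinset fun _ : Fin lam.parts.card => Finset.Icc 1 (k - 1)).filter
            (fun α => Multiset.ofList (List.ofFn α) = lam.parts),
          ((k - 1 + lam.parts.card).factorial : ℚ) /
            ((lam.parts.card.factorial : ℚ) * ∏ i, ((α i + 1).factorial : ℚ)) := by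
  set L := lam.parts.card
  set N := k - 1 + L
  set P := ∏ j ∈ lam.parts.toFinset, (lam.parts.count j)!
  set R := ((lam.parts.map (· + 1)).map Nat.factorial).prod
  have hIcc : ∀ x ∈ lam.parts, x ∈ Icc 1 (k - 1) := fun _ => lam.mem_Icc_of_mem_parts
  simp only [Multiset.count_map_add_one, show N + 1 - L = k by omega]
  have hM : (Nat.multinomial univ (fun o : Option (Fin N) =>
      o.elim k fun j => lam.parts.count (j : ℕ)) : ℚ) = (N + 1)! / (k ! * P) := by
    rw [eq_div_iff (by positivity), mul_comm, show N + 1 = k + L by omega]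
    exact_mod_cast Nat.multinomial_univ_option_count (fun _ => lam.lt_add_card_of_mem_parts) k
  have hC : (#{α ∈ Fintype.piFinset fun _ : Fin L => Icc 1 (k - 1) |
      Multiset.ofList (List.ofFn α) = lam.parts} : ℚ) = L ! / P := by
    have := card_filter_ofFn_eq_mul_prod_factorial _ L lam.parts rfl hIcc
    rw [Multiset.prod_count_eq_prod_toFinset factorial_zero hIcc] at this
    rw [eq_div_iff (by positivity)]
    exact_mod_cast this
  have hterm : ∀ α ∈ (Fintype.piFinset fun _ : Fin L => Icc 1 (k - 1)).filter
      (fun α => Multiset.ofList (List.ofFn α) = lam.parts), ∏ i, ((α i + 1)! : ℚ) = R := by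
    intro α hα
    rw [Fin.prod_univ_comp_eq_prod_map_ofFn (fun x => ((x + 1)! : ℚ)),
      (Finset.mem_filter.mp hα).2]
    simp [R, Multiset.map_map]
  have hones : (((lam.parts.map (· + 1)) + Multiset.replicate (n + 1 - k - L) 1).map
      Nat.factorial).prod = R := by
    simp [R]
  rw [sum_congr rfl fun α hα => by rw [hterm α hα], sum_const, nsmul_eq_mul, hones, hM, hC,
    factorial_succ]
  push_cast
  field_simp

/-- for a partition `λ ⊢ k-1` with `ℓ(λ) ≤ n+1-k`,
`Krew(λ+(1^{ℓ(λ)})) · multinomial(n; λ+(1^{n+1-k}))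
  = (n!/k!) · ∑_{α ~ λ} (k-1+ℓ(α))! / (ℓ(α)! ∏_i (α_i+1)!)`,
the sum being over all compositions `α` which are rearrangements of `λ`. Here
`λ+(1^{ℓ(λ)})` adds 1 to every part of `λ` (a partition of `k-1+ℓ(λ)`),
`λ+(1^{n+1-k})` is the partition of `n` with parts `λ_i+1` together with `n+1-k-ℓ(λ)`
ones, `Krew(μ) = (1/(N+1)) multinomial(N+1; N+1-ℓ(μ), m_1(μ), ...)` for `μ ⊢ N`, and
`multinomial(n; ν) = n!/∏_i ν_i!`. -/
theorem kreweras_multinomial_identity (k n : ℕ) (hk : 1 ≤ k) (hn : k - 1 ≤ n)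
    (lam : Nat.Partition (k - 1)) (hlen : lam.parts.card ≤ n + 1 - k) :
    ((1 / (((k - 1 + lam.parts.card : ℕ) : ℚ) + 1)) *
        (Nat.multinomial (Finset.univ : Finset (Option (Fin (k - 1 + lam.parts.card))))
          (fun o => o.elim ((k - 1 + lam.parts.card) + 1 - lam.parts.card)
            (fun j => (lam.parts.map (· + 1)).count ((j : ℕ) + 1))) : ℚ)) *
      ((n.factorial : ℚ) /
        ((((lam.parts.map (· + 1)) + Multiset.replicate (n + 1 - k - lam.parts.card) 1).map
            Nat.factorial).prod : ℕ))
    = ((n.factorial : ℚ) / (k.factorial : ℚ)) *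
        ∑ α ∈ (Fintype.piFinset fun _ : Fin lam.parts.card => Finset.Icc 1 (k - 1)).filter
            (fun α => Multiset.ofList (List.ofFn α) = lam.parts),
          ((k - 1 + lam.parts.card).factorial : ℚ) /
            ((lam.parts.card.factorial : ℚ) * ∏ i, ((α i + 1).factorial : ℚ)) :=
  kreweras_multinomial_identity_general k n hk lam
end
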